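/- arXiv:2104.00415 — 6 statements merged into one kernel-verified Lean document; each statement's English description precedes it below -/
import Mathlib

section
/- For every α ∈ [-1,1], the first-order arc-cosine kernel κ₁(α) = (1/π)(√(1-α²) + α(π - arccos α)) equals its Taylor series 1/π + α/2 + (1/π)·Σ_{n=0}^∞ ((2n)!/(2^{2n}(n!)²(2n+1)(2n+2)))·α^{2n+2}. -/
open Real Set Filter Topology

noncomputable def kappa1 (α : ℝ) : ℝ :=
  (Real.sqrt (1 - α ^ 2) + α * (Real.pi - Real.arccos α)) / Real.pi

/-- central binomial type coefficient -/
noncomputable def bb (n : ℕ) : ℝ :=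
  (Nat.factorial (2 * n) : ℝ) / (2 ^ (2 * n) * (Nat.factorial n : ℝ) ^ 2)

lemma bb_zero : bb 0 = 1 := by simp [bb, Nat.factorial]

lemma bb_pos (n : ℕ) : 0 < bb n := by
  rw [bb]; positivity

lemma bb_rec (n : ℕ) : (2 * (n : ℝ) + 2) * bb (n + 1) = (2 * (n : ℝ) + 1) * bb n := by
  have h : 2 * (n + 1) = (2 * n + 1) + 1 := by ring
  have hf : (Nat.factorial n : ℝ) ≠ 0 := by positivity
  rw [bb, bb, h, Nat.factorial_succ, Nat.factorial_succ, Nat.factorial_succ]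
  push_cast
  have h2 : (2:ℝ) ^ (2 * n) ≠ 0 := by positivity
  field_simp
  ring

lemma bb_le_one (n : ℕ) : bb n ≤ 1 := by
  induction n with
  | zero => simp [bb_zero]
  | succ n ih =>
    have h := bb_rec n
    have hpos : (0:ℝ) < 2 * (n:ℝ) + 2 := by positivity
    have hb := (bb_pos n).le
    nlinarith [bb_pos (n+1)]

/-- the three series -/
noncomputable def Bf (x : ℝ) : ℝ := ∑' n : ℕ, bb n * x ^ (2 * n)
noncomputable def Cf (x : ℝ) : ℝ := ∑' n : ℕ, bb n * (2 * (n : ℝ)) * x ^ (2 * n - 1)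
noncomputable def Af (x : ℝ) : ℝ := ∑' n : ℕ, bb n / (2 * (n : ℝ) + 1) * x ^ (2 * n + 1)
noncomputable def Gf (x : ℝ) : ℝ :=
  ∑' n : ℕ, bb n / ((2 * (n : ℝ) + 1) * (2 * (n : ℝ) + 2)) * x ^ (2 * n + 2)

lemma tsum_telescope' {f : ℕ → ℝ} (hs : Summable fun n => f n - f (n + 1))
    (h0 : Tendsto f atTop (𝓝 0)) : ∑' n, (f n - f (n + 1)) = f 0 := by
  have h := hs.hasSum.tendsto_sum_nat
  have h2 : (fun n => ∑ i ∈ Finset.range n, (f i - f (i + 1))) = fun n => f 0 - f n := by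
    funext n; exact Finset.sum_range_sub' f n
  rw [h2] at h
  have h3 : Tendsto (fun n => f 0 - f n) atTop (𝓝 (f 0 - 0)) :=
    tendsto_const_nhds.sub h0
  rw [sub_zero] at h3
  exact tendsto_nhds_unique h h3

lemma summable_B {x : ℝ} (hx : |x| < 1) : Summable fun n : ℕ => bb n * x ^ (2 * n) := by
  refine Summable.of_norm_bounded (summable_geometric_of_lt_one (by positivity)
    (by nlinarith [abs_nonneg x] : |x| ^ 2 < 1)) fun n => ?_
  have h1 : ‖bb n * x ^ (2 * n)‖ = bb n * |x| ^ (2 * n) := by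
    rw [norm_mul, Real.norm_eq_abs, Real.norm_eq_abs, abs_of_pos (bb_pos n), abs_pow]
  rw [h1, pow_mul]
  exact mul_le_of_le_one_left (by positivity) (bb_le_one n)

lemma r_facts {x : ℝ} (hx : x ∈ Ioo (-1:ℝ) 1) :
    |x| < (|x| + 1) / 2 ∧ 0 < (|x| + 1) / 2 ∧ (|x| + 1) / 2 < 1 := by
  obtain ⟨h1, h2⟩ := hx
  have h3 : |x| < 1 := abs_lt.mpr ⟨h1, h2⟩
  have h0 : 0 ≤ |x| := abs_nonneg x
  exact ⟨by linarith, by linarith, by linarith⟩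

lemma hasDerivAt_Af {x : ℝ} (hx : x ∈ Ioo (-1:ℝ) 1) : HasDerivAt Af (Bf x) x := by
  obtain ⟨hxr, hr0, hr1⟩ := r_facts hx
  set r : ℝ := (|x| + 1) / 2 with hrdef
  have hu : Summable fun n : ℕ => (r ^ 2) ^ n :=
    summable_geometric_of_lt_one (by positivity) (by nlinarith)
  refine hasDerivAt_tsum_of_isPreconnected hu (isOpen_Ioo (a := -r) (b := r))
    (convex_Ioo _ _).isPreconnected
    (g := fun n y => bb n / (2 * (n : ℝ) + 1) * y ^ (2 * n + 1))
    (g' := fun n y => bb n * y ^ (2 * n))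
    (fun n y _ => ?_) (fun n y hy => ?_) (y₀ := 0) (by constructor <;> simp [hr0] <;> linarith)
    ?_ (abs_lt.mp hxr)
  · have h := (hasDerivAt_pow (2 * n + 1) y).const_mul (bb n / (2 * (n : ℝ) + 1))
    have hne : (2 * (n : ℝ) + 1) ≠ 0 := by positivity
    convert h using 1
    · rfl
    simp only [Nat.add_sub_cancel]
    push_cast
    field_simp
  · have hyr : |y| ≤ r := (abs_lt.mpr hy).le
    have h1 : ‖bb n * y ^ (2 * n)‖ = bb n * |y| ^ (2 * n) := by
      rw [norm_mul, Real.norm_eq_abs, Real.norm_eq_abs, abs_of_pos (bb_pos n), abs_pow]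
    rw [h1, pow_mul]
    calc bb n * (|y| ^ 2) ^ n ≤ (|y| ^ 2) ^ n :=
          mul_le_of_le_one_left (by positivity) (bb_le_one n)
      _ ≤ (r ^ 2) ^ n := by
          apply pow_le_pow_left₀ (by positivity)
          nlinarith [abs_nonneg y]
  · apply Summable.congr summable_zero
    intro n
    rw [zero_pow (by omega : 2 * n + 1 ≠ 0)]
    ring

lemma hasDerivAt_Gf {x : ℝ} (hx : x ∈ Ioo (-1:ℝ) 1) : HasDerivAt Gf (Af x) x := by
  obtain ⟨hxr, hr0, hr1⟩ := r_facts hx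
  set r : ℝ := (|x| + 1) / 2 with hrdef
  have hu : Summable fun n : ℕ => r * (r ^ 2) ^ n :=
    (summable_geometric_of_lt_one (by positivity) (by nlinarith)).mul_left r
  refine hasDerivAt_tsum_of_isPreconnected hu (isOpen_Ioo (a := -r) (b := r))
    (convex_Ioo _ _).isPreconnected
    (g := fun n y => bb n / ((2 * (n : ℝ) + 1) * (2 * (n : ℝ) + 2)) * y ^ (2 * n + 2))
    (g' := fun n y => bb n / (2 * (n : ℝ) + 1) * y ^ (2 * n + 1))
    (fun n y _ => ?_) (fun n y hy => ?_) (y₀ := 0) (by constructor <;> simp [hr0])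
    ?_ (abs_lt.mp hxr)
  · have h := (hasDerivAt_pow (2 * n + 2) y).const_mul
      (bb n / ((2 * (n : ℝ) + 1) * (2 * (n : ℝ) + 2)))
    have hne : (2 * (n : ℝ) + 1) ≠ 0 := by positivity
    have hne2 : (2 * (n : ℝ) + 2) ≠ 0 := by positivity
    convert h using 1
    · rfl
    rw [show 2 * n + 2 - 1 = 2 * n + 1 by omega]
    push_cast
    field_simp
  · have hyr : |y| ≤ r := (abs_lt.mpr hy).le
    have hco : |bb n / (2 * (n : ℝ) + 1)| ≤ 1 := by
      rw [abs_of_pos (div_pos (bb_pos n) (by positivity))]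
      rw [div_le_one (by positivity)]
      have := bb_le_one n
      have : (0:ℝ) ≤ (n:ℝ) := Nat.cast_nonneg n
      linarith [bb_le_one n]
    have h1 : ‖bb n / (2 * (n : ℝ) + 1) * y ^ (2 * n + 1)‖ =
        |bb n / (2 * (n : ℝ) + 1)| * |y| ^ (2 * n + 1) := by
      rw [norm_mul, Real.norm_eq_abs, Real.norm_eq_abs, abs_pow]
    rw [h1]
    have h2 : |y| ^ (2 * n + 1) ≤ r ^ (2 * n + 1) :=
      pow_le_pow_left₀ (abs_nonneg y) hyr _
    have h3 : r ^ (2 * n + 1) = r * (r ^ 2) ^ n := by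
      rw [← pow_mul]; ring
    calc |bb n / (2 * (n : ℝ) + 1)| * |y| ^ (2 * n + 1)
        ≤ 1 * r ^ (2 * n + 1) := by
          apply mul_le_mul hco h2 (by positivity) (by norm_num)
      _ = r * (r ^ 2) ^ n := by rw [one_mul, h3]
  · apply Summable.congr summable_zero
    intro n
    rw [zero_pow (by omega : 2 * n + 2 ≠ 0)]
    ring

lemma hasDerivAt_Bf {x : ℝ} (hx : x ∈ Ioo (-1:ℝ) 1) : HasDerivAt Bf (Cf x) x := by
  obtain ⟨hxr, hr0, hr1⟩ := r_facts hx
  set r : ℝ := (|x| + 1) / 2 with hrdef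
  have hu : Summable fun n : ℕ => (2 / r) * ((n : ℝ) ^ 1 * (r ^ 2) ^ n) :=
    (summable_pow_mul_geometric_of_norm_lt_one 1 (r := r ^ 2)
      (by rw [Real.norm_eq_abs, abs_of_pos (by positivity)]; nlinarith)).mul_left _
  refine hasDerivAt_tsum_of_isPreconnected hu (isOpen_Ioo (a := -r) (b := r))
    (convex_Ioo _ _).isPreconnected
    (g := fun n y => bb n * y ^ (2 * n))
    (g' := fun n y => bb n * (2 * (n : ℝ)) * y ^ (2 * n - 1))
    (fun n y _ => ?_) (fun n y hy => ?_) (y₀ := 0) (by constructor <;> simp [hr0])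
    ?_ (abs_lt.mp hxr)
  · have h := (hasDerivAt_pow (2 * n) y).const_mul (bb n)
    convert h using 1
    · rfl
    push_cast
    ring
  · have hyr : |y| ≤ r := (abs_lt.mpr hy).le
    have h1 : ‖bb n * (2 * (n : ℝ)) * y ^ (2 * n - 1)‖ =
        bb n * (2 * (n : ℝ)) * |y| ^ (2 * n - 1) := by
      rw [norm_mul, norm_mul, Real.norm_eq_abs, Real.norm_eq_abs, Real.norm_eq_abs,
        abs_of_pos (bb_pos n), abs_of_nonneg (by positivity), abs_pow]
    rw [h1]
    rcases n with _ | m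
    · simp
    · have he : 2 * (m + 1) - 1 = 2 * m + 1 := by omega
      rw [he]
      have h2 : |y| ^ (2 * m + 1) ≤ r ^ (2 * m + 1) :=
        pow_le_pow_left₀ (abs_nonneg y) hyr _
      have h3 : (2 / r) * (((m:ℕ)+1 : ℝ) ^ 1 * (r ^ 2) ^ (m+1)) =
          (2 * ((m:ℝ) + 1)) * r ^ (2 * m + 1) := by
        have : (r ^ 2) ^ (m + 1) = r ^ (2 * m + 1) * r := by rw [← pow_mul]; ring
        rw [this]
        field_simp
      have hb2 : bb (m+1) * (2 * ((m:ℕ)+1 : ℝ)) ≤ 2 * ((m:ℝ) + 1) := by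
        have := bb_le_one (m+1)
        have := bb_pos (m+1)
        nlinarith [Nat.cast_nonneg (α := ℝ) m]
      calc bb (m+1) * (2 * (((m+1:ℕ)) : ℝ)) * |y| ^ (2 * m + 1)
          ≤ (2 * ((m:ℝ) + 1)) * r ^ (2 * m + 1) := by
            push_cast
            apply mul_le_mul _ h2 (by positivity) (by positivity)
            push_cast at hb2 ⊢
            exact hb2
        _ = (2 / r) * ((((m+1:ℕ)) : ℝ) ^ 1 * (r ^ 2) ^ (m+1)) := by
            push_cast
            exact h3.symm
  · refine summable_of_ne_finset_zero (s := {0}) fun n hn => ?_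
    simp only [Finset.mem_singleton] at hn
    show bb n * (0:ℝ) ^ (2 * n) = 0
    rw [zero_pow (by omega : 2 * n ≠ 0)]
    ring

lemma summable_C {x : ℝ} (hx : x ∈ Ioo (-1:ℝ) 1) :
    Summable fun n : ℕ => bb n * (2 * (n : ℝ)) * x ^ (2 * n - 1) := by
  obtain ⟨hxr, hr0, hr1⟩ := r_facts hx
  set r : ℝ := (|x| + 1) / 2 with hrdef
  have hu : Summable fun n : ℕ => (2 / r) * ((n : ℝ) ^ 1 * (r ^ 2) ^ n) :=
    (summable_pow_mul_geometric_of_norm_lt_one 1 (r := r ^ 2)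
      (by rw [Real.norm_eq_abs, abs_of_pos (by positivity)]; nlinarith)).mul_left _
  refine Summable.of_norm_bounded hu fun n => ?_
  have hyr : |x| ≤ r := hxr.le
  have h1 : ‖bb n * (2 * (n : ℝ)) * x ^ (2 * n - 1)‖ =
      bb n * (2 * (n : ℝ)) * |x| ^ (2 * n - 1) := by
    rw [norm_mul, norm_mul, Real.norm_eq_abs, Real.norm_eq_abs, Real.norm_eq_abs,
      abs_of_pos (bb_pos n), abs_of_nonneg (by positivity), abs_pow]
  rw [h1]
  rcases n with _ | m
  · simp
  · have he : 2 * (m + 1) - 1 = 2 * m + 1 := by omega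
    rw [he]
    have h2 : |x| ^ (2 * m + 1) ≤ r ^ (2 * m + 1) :=
      pow_le_pow_left₀ (abs_nonneg x) hyr _
    have h3 : 2 / r * (((m:ℝ) + 1) ^ 1 * (r ^ 2) ^ (m + 1)) =
        (2 * ((m:ℝ) + 1)) * r ^ (2 * m + 1) := by
      have : (r ^ 2) ^ (m + 1) = r ^ (2 * m + 1) * r := by rw [← pow_mul]; ring
      rw [this]
      field_simp
    have hb2 : bb (m+1) * (2 * ((m:ℝ) + 1)) ≤ 2 * ((m:ℝ) + 1) := by
      have := bb_le_one (m+1)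
      have := bb_pos (m+1)
      nlinarith [Nat.cast_nonneg (α := ℝ) m]
    calc bb (m+1) * (2 * (((m+1:ℕ)) : ℝ)) * |x| ^ (2 * m + 1)
        ≤ (2 * ((m:ℝ) + 1)) * r ^ (2 * m + 1) := by
          push_cast
          apply mul_le_mul _ h2 (by positivity) (by positivity)
          push_cast at hb2 ⊢
          exact hb2
      _ = (2 / r) * ((((m+1:ℕ)) : ℝ) ^ 1 * (r ^ 2) ^ (m+1)) := by
          push_cast
          exact h3.symm

lemma Cf_identity {x : ℝ} (hx : x ∈ Ioo (-1:ℝ) 1) : (1 - x ^ 2) * Cf x = x * Bf x := by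
  have hx1 : |x| < 1 := abs_lt.mpr ⟨hx.1, hx.2⟩
  have hsB := summable_B hx1
  have hsC := summable_C hx
  -- series forms
  have s1 : Summable fun n : ℕ => bb n * x ^ (2 * n + 1) :=
    (hsB.mul_left x).congr fun n => by ring
  have s2 : Summable fun n : ℕ => bb n * (2 * (n : ℝ)) * x ^ (2 * n + 1) := by
    refine (hsC.mul_left (x ^ 2)).congr fun n => ?_
    rcases n with _ | m
    · simp
    · have he : 2 * (m + 1) - 1 = 2 * m + 1 := by omega
      rw [he]
      have he2 : 2 * (m + 1) + 1 = (2 * m + 1) + 2 := by omega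
      rw [he2, pow_add]
      ring
  have hxB : x * Bf x = ∑' n : ℕ, bb n * x ^ (2 * n + 1) := by
    rw [Bf, ← tsum_mul_left]
    exact tsum_congr fun n => by ring
  have hx2C : x ^ 2 * Cf x = ∑' n : ℕ, bb n * (2 * (n : ℝ)) * x ^ (2 * n + 1) := by
    rw [Cf, ← tsum_mul_left]
    refine tsum_congr fun n => ?_
    rcases n with _ | m
    · simp
    · have he : 2 * (m + 1) - 1 = 2 * m + 1 := by omega
      rw [he]
      have he2 : 2 * (m + 1) + 1 = (2 * m + 1) + 2 := by omega
      rw [he2, pow_add]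
      ring
  -- the telescoping step
  have hf0 : Tendsto (fun n : ℕ => bb n * (2 * (n : ℝ)) * x ^ (2 * n - 1)) atTop (𝓝 0) :=
    hsC.tendsto_atTop_zero
  have hterm : ∀ n : ℕ, bb n * (2 * (n : ℝ)) * x ^ (2 * n - 1)
      - bb (n+1) * (2 * ((n:ℝ)+1)) * x ^ (2 * (n+1) - 1)
      = bb n * (2 * (n : ℝ)) * x ^ (2 * n - 1)
        - (bb n * (2 * (n : ℝ)) * x ^ (2 * n + 1) + bb n * x ^ (2 * n + 1)) := by
    intro n
    have he : 2 * (n + 1) - 1 = 2 * n + 1 := by omega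
    rw [he]
    have hrec := bb_rec n
    have : bb (n+1) * (2 * ((n:ℝ)+1)) = (2 * (n:ℝ) + 1) * bb n := by linarith [bb_rec n]
    rw [this]
    ring
  set g : ℕ → ℝ := fun n => bb n * (2 * (n : ℝ)) * x ^ (2 * n - 1) with hg
  have hterm' : ∀ n : ℕ, g n - g (n + 1)
      = g n - (bb n * (2 * (n : ℝ)) * x ^ (2 * n + 1) + bb n * x ^ (2 * n + 1)) := by
    intro n
    have h := hterm n
    simp only [hg]
    push_cast
    push_cast at h
    linarith [h]
  have hss : Summable fun n : ℕ => g n - g (n + 1) := by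
    refine (hsC.sub (s2.add s1)).congr fun n => ?_
    exact (hterm' n).symm
  have htel : ∑' n : ℕ, (g n - g (n + 1)) = 0 := by
    rw [tsum_telescope' hss hf0]
    simp [hg]
  have hkey : Cf x - (x ^ 2 * Cf x + x * Bf x) = 0 := by
    rw [hx2C, hxB, Cf, ← Summable.tsum_add s2 s1, ← Summable.tsum_sub hsC (s2.add s1)]
    rw [← htel]
    exact tsum_congr fun n => (hterm' n).symm
  nlinarith [hkey]

lemma const_on_Ioo {f : ℝ → ℝ} (hf : ∀ x ∈ Ioo (-1:ℝ) 1, HasDerivAt f 0 x)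
    {x : ℝ} (hx : x ∈ Ioo (-1:ℝ) 1) : f x = f 0 := by
  have hdiff : DifferentiableOn ℝ f (Ioo (-1:ℝ) 1) := fun y hy =>
    (hf y hy).differentiableAt.differentiableWithinAt
  refine Convex.is_const_of_fderivWithin_eq_zero (convex_Ioo _ _) hdiff (fun y hy => ?_) hx
    (by norm_num)
  rw [fderivWithin_of_isOpen isOpen_Ioo hy, (hf y hy).hasFDerivAt.fderiv]
  ext z
  simp

lemma Bf_zero : Bf 0 = 1 := by
  rw [Bf, tsum_eq_single 0]
  · simp [bb_zero]
  · intro n hn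
    rw [zero_pow (by omega : 2 * n ≠ 0)]
    ring

lemma Bf_eq {x : ℝ} (hx : x ∈ Ioo (-1:ℝ) 1) : Bf x = 1 / Real.sqrt (1 - x ^ 2) := by
  have hW : ∀ y ∈ Ioo (-1:ℝ) 1, HasDerivAt (fun z => Real.sqrt (1 - z ^ 2) * Bf z) 0 y := by
    intro y hy
    have hy2 : (0:ℝ) < 1 - y ^ 2 := by nlinarith [hy.1, hy.2]
    have hs : (0:ℝ) < Real.sqrt (1 - y ^ 2) := Real.sqrt_pos.mpr hy2
    have hsq : Real.sqrt (1 - y ^ 2) ^ 2 = 1 - y ^ 2 := Real.sq_sqrt hy2.le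
    have h1 : HasDerivAt (fun z : ℝ => 1 - z ^ 2) (-(2 * y)) y := by
      simpa using (hasDerivAt_pow 2 y).const_sub 1
    have h2 : HasDerivAt (fun z : ℝ => Real.sqrt (1 - z ^ 2))
        (-(2 * y) / (2 * Real.sqrt (1 - y ^ 2))) y :=
      (Real.hasDerivAt_sqrt hy2.ne').comp y h1 |>.congr_deriv (by ring)
    have h3 := h2.mul (hasDerivAt_Bf hy)
    convert h3 using 1
    · rfl
    · rfl
    · rfl
    have hid := Cf_identity hy
    have hCf : Cf y = y * Bf y / (1 - y ^ 2) := by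
      field_simp at hid ⊢
      linarith [hid]
    rw [hCf]
    field_simp
    linear_combination (-(y * Bf y)) * hsq
  have hconst := const_on_Ioo hW hx
  have hx2 : (0:ℝ) < 1 - x ^ 2 := by nlinarith [hx.1, hx.2]
  have hs : (0:ℝ) < Real.sqrt (1 - x ^ 2) := Real.sqrt_pos.mpr hx2
  simp only [Bf_zero] at hconst
  rw [show (1:ℝ) - 0 ^ 2 = 1 by norm_num, Real.sqrt_one] at hconst
  field_simp
  linarith [hconst]

lemma Af_zero : Af 0 = 0 := by
  rw [Af]
  have : ∀ n : ℕ, bb n / (2 * (n : ℝ) + 1) * (0:ℝ) ^ (2 * n + 1) = 0 := fun n => by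
    rw [zero_pow (by omega : 2 * n + 1 ≠ 0)]; ring
  rw [tsum_congr this, tsum_zero]

lemma Af_eq {x : ℝ} (hx : x ∈ Ioo (-1:ℝ) 1) : Af x = Real.arcsin x := by
  have h : ∀ y ∈ Ioo (-1:ℝ) 1, HasDerivAt (fun z => Af z - Real.arcsin z) 0 y := by
    intro y hy
    have hy2 : (0:ℝ) < 1 - y ^ 2 := by nlinarith [hy.1, hy.2]
    have h1 := hasDerivAt_Af hy
    have h2 := Real.hasDerivAt_arcsin (x := y) (ne_of_gt hy.1) (ne_of_lt hy.2)
    have := h1.sub h2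
    rw [Bf_eq hy] at this
    simp at this
    exact this
  have hc := const_on_Ioo h hx
  simp only [Af_zero, Real.arcsin_zero, sub_zero] at hc
  linarith [hc]

lemma Gf_zero : Gf 0 = 0 := by
  rw [Gf]
  have : ∀ n : ℕ, bb n / ((2 * (n : ℝ) + 1) * (2 * (n : ℝ) + 2)) * (0:ℝ) ^ (2 * n + 2) = 0 :=
    fun n => by rw [zero_pow (by omega : 2 * n + 2 ≠ 0)]; ring
  rw [tsum_congr this, tsum_zero]

lemma Gf_Ioo {x : ℝ} (hx : x ∈ Ioo (-1:ℝ) 1) :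
    Gf x = Real.sqrt (1 - x ^ 2) + x * Real.arcsin x - 1 := by
  have h : ∀ y ∈ Ioo (-1:ℝ) 1, HasDerivAt
      (fun z => Gf z - (Real.sqrt (1 - z ^ 2) + z * Real.arcsin z - 1)) 0 y := by
    intro y hy
    have hy2 : (0:ℝ) < 1 - y ^ 2 := by nlinarith [hy.1, hy.2]
    have hs : (0:ℝ) < Real.sqrt (1 - y ^ 2) := Real.sqrt_pos.mpr hy2
    have hG := hasDerivAt_Gf hy
    rw [Af_eq hy] at hG
    have h1 : HasDerivAt (fun z : ℝ => 1 - z ^ 2) (-(2 * y)) y := by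
      simpa using (hasDerivAt_pow 2 y).const_sub 1
    have h2 : HasDerivAt (fun z : ℝ => Real.sqrt (1 - z ^ 2))
        (-(2 * y) / (2 * Real.sqrt (1 - y ^ 2))) y :=
      (Real.hasDerivAt_sqrt hy2.ne').comp y h1 |>.congr_deriv (by ring)
    have harc := Real.hasDerivAt_arcsin (x := y) (ne_of_gt hy.1) (ne_of_lt hy.2)
    have h3 := (hasDerivAt_id y).mul harc
    have h4 := (h2.add h3).sub_const 1
    have h5 := hG.sub h4
    convert h5 using 1
    · rfl
    · rfl
    · rfl
    field_simp
    ring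
    simp
  have hc := const_on_Ioo h hx
  simp only [Gf_zero] at hc
  norm_num at hc
  linarith [hc]

lemma continuousOn_Gf : ContinuousOn Gf (Icc (-1:ℝ) 1) := by
  have hu : Summable fun n : ℕ => 1 / ((n : ℝ) + 1) ^ 2 := by
    have h := Real.summable_one_div_nat_pow.mpr (by norm_num : 1 < 2)
    have h2 := (summable_nat_add_iff 1).mpr h
    refine h2.congr fun n => ?_
    push_cast
    norm_num
  have hbound : ∀ (n : ℕ) (x : ℝ), x ∈ Icc (-1:ℝ) 1 →
      ‖bb n / ((2 * (n : ℝ) + 1) * (2 * (n : ℝ) + 2)) * x ^ (2 * n + 2)‖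
        ≤ 1 / ((n : ℝ) + 1) ^ 2 := by
    intro n x hx
    have hx1 : |x| ≤ 1 := abs_le.mpr ⟨hx.1, hx.2⟩
    have hpow : |x| ^ (2 * n + 2) ≤ 1 := pow_le_one₀ (abs_nonneg x) hx1
    have hco : bb n / ((2 * (n : ℝ) + 1) * (2 * (n : ℝ) + 2)) ≤ 1 / ((n : ℝ) + 1) ^ 2 := by
      rw [div_le_div_iff₀ (by positivity) (by positivity)]
      nlinarith [bb_le_one n, bb_pos n, Nat.cast_nonneg (α := ℝ) n]
    have hconn : (0:ℝ) ≤ bb n / ((2 * (n : ℝ) + 1) * (2 * (n : ℝ) + 2)) :=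
      div_nonneg (bb_pos n).le (by positivity)
    rw [norm_mul, Real.norm_eq_abs, Real.norm_eq_abs, abs_pow, abs_of_nonneg hconn]
    calc bb n / ((2 * (n : ℝ) + 1) * (2 * (n : ℝ) + 2)) * |x| ^ (2 * n + 2)
        ≤ bb n / ((2 * (n : ℝ) + 1) * (2 * (n : ℝ) + 2)) * 1 :=
          mul_le_mul_of_nonneg_left hpow hconn
      _ ≤ 1 / ((n : ℝ) + 1) ^ 2 := by rw [mul_one]; exact hco
  have htu := tendstoUniformlyOn_tsum hu hbound
  apply htu.continuousOn
  refine Filter.Frequently.of_forall fun t => ?_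
  apply continuousOn_finset_sum
  intro i _
  exact (continuous_const.mul (continuous_pow _)).continuousOn

lemma Gf_Icc {x : ℝ} (hx : x ∈ Icc (-1:ℝ) 1) :
    Gf x = Real.sqrt (1 - x ^ 2) + x * Real.arcsin x - 1 := by
  have hne : ((-1:ℝ)) < 1 := by norm_num
  have hcl : x ∈ closure (Ioo (-1:ℝ) 1) := by rw [closure_Ioo hne.ne]; exact hx
  have hnb : (𝓝[Ioo (-1:ℝ) 1] x).NeBot := mem_closure_iff_nhdsWithin_neBot.mp hcl
  have hF : Continuous fun z : ℝ => Real.sqrt (1 - z ^ 2) + z * Real.arcsin z - 1 := by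
    apply Continuous.sub _ continuous_const
    apply Continuous.add
    · exact (continuous_const.sub (continuous_pow 2)).sqrt
    · exact continuous_id.mul Real.continuous_arcsin
  have h1 : Tendsto Gf (𝓝[Ioo (-1:ℝ) 1] x) (𝓝 (Gf x)) :=
    ((continuousOn_Gf x hx).mono Ioo_subset_Icc_self).tendsto
  have h2 : Tendsto (fun z : ℝ => Real.sqrt (1 - z ^ 2) + z * Real.arcsin z - 1)
      (𝓝[Ioo (-1:ℝ) 1] x) (𝓝 (Real.sqrt (1 - x ^ 2) + x * Real.arcsin x - 1)) :=
    (hF.tendsto x).mono_left nhdsWithin_le_nhds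
  have h3 : Tendsto (fun z : ℝ => Real.sqrt (1 - z ^ 2) + z * Real.arcsin z - 1)
      (𝓝[Ioo (-1:ℝ) 1] x) (𝓝 (Gf x)) := by
    refine h1.congr' ?_
    filter_upwards [self_mem_nhdsWithin] with z hz
    exact Gf_Ioo hz
  exact (tendsto_nhds_unique h3 h2)

/-- For every α ∈ [-1,1], the first-order arc-cosine kernel equals its
Taylor series. -/
theorem kappa1_eq_taylor_series (α : ℝ) (hα : α ∈ Set.Icc (-1 : ℝ) 1) :
    kappa1 α = 1 / Real.pi + α / 2 +
      (1 / Real.pi) * ∑' n : ℕ,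
        ((Nat.factorial (2 * n) : ℝ) /
            (2 ^ (2 * n) * (Nat.factorial n : ℝ) ^ 2 * (2 * (n : ℝ) + 1) * (2 * (n : ℝ) + 2))) *
          α ^ (2 * n + 2) := by
  have hts : (∑' n : ℕ,
      ((Nat.factorial (2 * n) : ℝ) /
          (2 ^ (2 * n) * (Nat.factorial n : ℝ) ^ 2 * (2 * (n : ℝ) + 1) * (2 * (n : ℝ) + 2))) *
        α ^ (2 * n + 2)) = Gf α := by
    rw [Gf]
    refine tsum_congr fun n => ?_
    rw [bb, div_div]
    ring_nf
  rw [hts, Gf_Icc hα, kappa1, Real.arccos_eq_pi_div_two_sub_arcsin]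
  have hpi : Real.pi ≠ 0 := Real.pi_ne_zero
  field_simp
  ring
end

section
/- For every α ∈ [-1,1], the zeroth-order arc-cosine kernel κ₀(α) = (1/π)(π - arccos α) equals its Taylor series 1/2 + (1/π)·Σ_{n=0}^∞ ((2n)!/(2^{2n}(n!)²(2n+1)))·α^{2n+1}. -/
open Real


open Real Filter Set

namespace ArcCosineAux

/-- central binomial coefficient over `4^n`. -/
noncomputable def bb (n : ℕ) : ℝ :=
  (Nat.factorial (2 * n) : ℝ) / (2 ^ (2 * n) * (Nat.factorial n : ℝ) ^ 2)

/-- Taylor coefficients of `arcsin`. -/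
noncomputable def cc (n : ℕ) : ℝ :=
  (Nat.factorial (2 * n) : ℝ) /
    (2 ^ (2 * n) * (Nat.factorial n : ℝ) ^ 2 * (2 * (n : ℝ) + 1))

lemma bb_pos (n : ℕ) : 0 < bb n := by
  have h1 : (0:ℝ) < (Nat.factorial (2*n) : ℝ) := by positivity
  have h2 : (0:ℝ) < (Nat.factorial n : ℝ) := by positivity
  unfold bb; positivity

lemma cc_eq (n : ℕ) : cc n = bb n / (2 * (n : ℝ) + 1) := by
  rw [cc, bb, div_div]

lemma cc_pos (n : ℕ) : 0 < cc n := by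
  rw [cc_eq]
  have := bb_pos n
  positivity

lemma bb_zero : bb 0 = 1 := by simp [bb, Nat.factorial]

lemma two_n_pos (n : ℕ) : (0:ℝ) < 2 * (n:ℝ) + 1 := by positivity

lemma bb_rec (n : ℕ) : bb (n + 1) * (2 * (n : ℝ) + 2) = bb n * (2 * (n : ℝ) + 1) := by
  have h2 : 2 * (n + 1) = (2 * n + 1) + 1 := by ring
  have hf : (Nat.factorial (2 * (n+1)) : ℝ)
      = (2*(n:ℝ)+2) * ((2*(n:ℝ)+1) * (Nat.factorial (2*n) : ℝ)) := by
    rw [h2, Nat.factorial_succ, Nat.factorial_succ]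
    push_cast; ring
  have hfn : (Nat.factorial (n+1) : ℝ) = ((n:ℝ)+1) * (Nat.factorial n : ℝ) := by
    rw [Nat.factorial_succ]; push_cast; ring
  have hp : (2:ℝ) ^ (2 * (n+1)) = 4 * 2 ^ (2*n) := by
    rw [show 2 * (n+1) = 2*n + 2 by ring, pow_add]; ring
  have hfact : (Nat.factorial n : ℝ) ≠ 0 := by positivity
  have hpow : (2:ℝ) ^ (2*n) ≠ 0 := by positivity
  rw [bb, bb, hf, hfn, hp]
  field_simp
  ring

lemma bb_succ (n : ℕ) : bb (n+1) = bb n * (2 * (n : ℝ) + 1) / (2 * (n : ℝ) + 2) := by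
  have h := bb_rec n
  have h2 : (2 * (n:ℝ) + 2) ≠ 0 := by positivity
  field_simp
  linarith [h]

lemma bb_le_one (n : ℕ) : bb n ≤ 1 := by
  induction n with
  | zero => rw [bb_zero]
  | succ n ih =>
    rw [bb_succ]
    have hb := bb_pos n
    have h2 : (0:ℝ) < 2 * (n:ℝ) + 2 := by positivity
    rw [div_le_one h2]
    nlinarith

lemma bb_sq (n : ℕ) : bb n ^ 2 * (2 * (n:ℝ) + 1) ≤ 1 := by
  induction n with
  | zero => norm_num [bb_zero]
  | succ n ih =>
    have hb := bb_pos n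
    have h2 : (0:ℝ) < 2 * (n:ℝ) + 2 := by positivity
    rw [bb_succ]
    have key : (2*(n:ℝ)+1) * (2*(n:ℝ)+3) ≤ (2*(n:ℝ)+2)^2 := by nlinarith
    have : (bb n * (2 * (n:ℝ) + 1) / (2 * (n:ℝ) + 2)) ^ 2 * (2 * ((n:ℝ)+1) + 1)
        = (bb n ^2 * (2*(n:ℝ)+1)) * ((2*(n:ℝ)+1) * (2*(n:ℝ)+3) / (2*(n:ℝ)+2)^2) := by
      field_simp; ring
    push_cast
    push_cast at this
    rw [this]
    have h1 : (2*(n:ℝ)+1) * (2*(n:ℝ)+3) / (2*(n:ℝ)+2)^2 ≤ 1 := by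
      rw [div_le_one (by positivity)]; exact key
    have h0 : 0 ≤ (2*(n:ℝ)+1) * (2*(n:ℝ)+3) / (2*(n:ℝ)+2)^2 := by positivity
    calc (bb n ^2 * (2*(n:ℝ)+1)) * ((2*(n:ℝ)+1) * (2*(n:ℝ)+3) / (2*(n:ℝ)+2)^2)
        ≤ 1 * 1 := by
          apply mul_le_mul ih h1 h0
          nlinarith
      _ = 1 := by norm_num

lemma cc_le (n : ℕ) : cc n ≤ ((n:ℝ)+1) ^ (-(3/2) : ℝ) := by
  have hc := (cc_pos n).le
  have ht : (0:ℝ) < (n:ℝ) + 1 := by positivity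
  have hu : (0:ℝ) ≤ ((n:ℝ)+1) ^ (-(3/2) : ℝ) := by positivity
  refine le_of_pow_le_pow_left₀ (n := 2) two_ne_zero hu ?_
  have husq : (((n:ℝ)+1) ^ (-(3/2) : ℝ)) ^ 2 = (((n:ℝ)+1)^3)⁻¹ := by
    rw [← Real.rpow_natCast (((n:ℝ)+1) ^ (-(3/2) : ℝ)) 2, ← Real.rpow_mul ht.le]
    norm_num
  rw [husq]
  -- cc n ^ 2 * (2n+1)^3 = bb n^2 * (2n+1) ≤ 1
  have h1 : cc n ^ 2 * (2*(n:ℝ)+1)^3 ≤ 1 := by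
    have : cc n ^ 2 * (2*(n:ℝ)+1)^3 = bb n ^2 * (2*(n:ℝ)+1) := by
      rw [cc_eq]
      field_simp
    rw [this]; exact bb_sq n
  have h2 : ((n:ℝ)+1)^3 ≤ (2*(n:ℝ)+1)^3 := by
    apply pow_le_pow_left₀ (by positivity)
    linarith
  rw [inv_eq_one_div, le_div_iff₀ (by positivity)]
  have h4 : cc n ^ 2 * ((n:ℝ)+1)^3 ≤ cc n ^ 2 * (2*(n:ℝ)+1)^3 :=
    mul_le_mul_of_nonneg_left h2 (sq_nonneg _)
  linarith

lemma cc_summable : Summable cc := by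
  have h1 : Summable (fun n : ℕ => ((n:ℝ)) ^ (-(3/2) : ℝ)) :=
    Real.summable_nat_rpow.mpr (by norm_num)
  have h2 : Summable (fun n : ℕ => ((n:ℝ)+1) ^ (-(3/2) : ℝ)) := by
    have := (summable_nat_add_iff 1).mpr h1
    simpa using this
  exact h2.of_nonneg_of_le (fun n => (cc_pos n).le) cc_le

end ArcCosineAux

namespace ArcCosineAux

open Filter Set Topology

noncomputable def FF (x : ℝ) : ℝ := ∑' n : ℕ, cc n * x ^ (2*n+1)
noncomputable def gg (x : ℝ) : ℝ := ∑' n : ℕ, bb n * x ^ (2*n)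
noncomputable def DD (x : ℝ) : ℝ := ∑' n : ℕ, 2*(n:ℝ) * bb n * x ^ (2*n-1)

lemma g_bound {y r : ℝ} (hy : |y| ≤ r) (n : ℕ) :
    ‖bb n * y ^ (2*n)‖ ≤ (r^2) ^ n := by
  have hr0 : 0 ≤ r := (abs_nonneg y).trans hy
  have h1 : |y| ^ (2*n) ≤ r ^ (2*n) := pow_le_pow_left₀ (abs_nonneg y) hy _
  calc ‖bb n * y ^ (2*n)‖ = bb n * |y| ^ (2*n) := by
        rw [Real.norm_eq_abs, abs_mul, abs_pow, abs_of_nonneg (bb_pos n).le]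
    _ ≤ 1 * r ^ (2*n) := mul_le_mul (bb_le_one n) h1 (by positivity) one_pos.le
    _ = (r^2) ^ n := by rw [one_mul, ← pow_mul, mul_comm 2 n]

lemma summable_g {x : ℝ} (hx : |x| < 1) : Summable fun n : ℕ => bb n * x ^ (2*n) := by
  have hgeo : Summable fun n : ℕ => (|x|^2) ^ n := by
    apply summable_geometric_of_lt_one (by positivity)
    nlinarith [abs_nonneg x]
  exact Summable.of_norm_bounded hgeo (g_bound le_rfl)

lemma dd_bound {y r : ℝ} (hy : |y| ≤ r) (hr1 : r ≤ 1) (n : ℕ) :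
    ‖2*(n:ℝ) * bb n * y ^ (2*n-1)‖ ≤ 2*(n:ℝ) * r ^ n := by
  have hr0 : 0 ≤ r := (abs_nonneg y).trans hy
  have h1 : |y| ^ (2*n-1) ≤ r ^ (2*n-1) := pow_le_pow_left₀ (abs_nonneg y) hy _
  have h2 : r ^ (2*n-1) ≤ r ^ n := pow_le_pow_of_le_one hr0 hr1 (by omega)
  have h3 : bb n * |y| ^ (2*n-1) ≤ 1 * r ^ n :=
    mul_le_mul (bb_le_one n) (h1.trans h2) (by positivity) one_pos.le
  calc ‖2*(n:ℝ) * bb n * y ^ (2*n-1)‖ = 2*(n:ℝ) * (bb n * |y| ^ (2*n-1)) := by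
        rw [Real.norm_eq_abs, abs_mul, abs_mul, abs_mul, abs_pow,
          abs_of_nonneg (bb_pos n).le]
        norm_num
        ring
    _ ≤ 2*(n:ℝ) * (1 * r ^ n) := mul_le_mul_of_nonneg_left h3 (by positivity)
    _ = 2*(n:ℝ) * r ^ n := by ring

lemma summable_two_mul_geom {r : ℝ} (h0 : 0 ≤ r) (h1 : r < 1) :
    Summable fun n : ℕ => 2*(n:ℝ) * r ^ n := by
  have := summable_pow_mul_geometric_of_norm_lt_one (R := ℝ) 1
    (r := r) (by rwa [Real.norm_eq_abs, abs_of_nonneg h0])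
  simpa [pow_one, mul_assoc] using this.mul_left 2

lemma summable_dd {x : ℝ} (hx : |x| < 1) :
    Summable fun n : ℕ => 2*(n:ℝ) * bb n * x ^ (2*n-1) :=
  Summable.of_norm_bounded (summable_two_mul_geom (abs_nonneg x) hx)
    (fun n => dd_bound le_rfl hx.le n)

lemma summable_cc_pow {x : ℝ} (hx : |x| ≤ 1) :
    Summable fun n : ℕ => cc n * x ^ (2*n+1) := by
  apply Summable.of_norm_bounded cc_summable
  intro n
  rw [Real.norm_eq_abs, abs_mul, abs_pow, abs_of_nonneg (cc_pos n).le]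
  calc cc n * |x| ^ (2*n+1) ≤ cc n * 1 :=
        mul_le_mul_of_nonneg_left (pow_le_one₀ (abs_nonneg x) hx) (cc_pos n).le
    _ = cc n := mul_one _

lemma gg_hasDerivAt {x : ℝ} (hx : |x| < 1) : HasDerivAt gg (DD x) x := by
  set r : ℝ := (|x| + 1) / 2 with hr
  have hxr : |x| < r := by rw [hr]; linarith
  have hr1 : r < 1 := by rw [hr]; linarith
  have hr0 : 0 < r := lt_of_le_of_lt (abs_nonneg x) hxr
  have hxm : x ∈ Ioo (-r) r := abs_lt.mp hxr
  unfold gg DD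
  exact hasDerivAt_tsum_of_isPreconnected
    (u := fun n : ℕ => 2*(n:ℝ) * r ^ n)
    (summable_two_mul_geom hr0.le hr1)
    isOpen_Ioo (convex_Ioo _ _).isPreconnected
    (fun n y _ => by
      have := (hasDerivAt_pow (2*n) y).const_mul (bb n)
      refine this.congr_deriv ?_
      push_cast
      ring)
    (fun n y hy => dd_bound (abs_lt.mpr hy).le hr1.le n)
    hxm (summable_g hx) hxm

lemma FF_hasDerivAt {x : ℝ} (hx : |x| < 1) : HasDerivAt FF (gg x) x := by
  set r : ℝ := (|x| + 1) / 2 with hr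
  have hxr : |x| < r := by rw [hr]; linarith
  have hr1 : r < 1 := by rw [hr]; linarith
  have hr0 : 0 < r := lt_of_le_of_lt (abs_nonneg x) hxr
  have hxm : x ∈ Ioo (-r) r := abs_lt.mp hxr
  have hbb : ∀ n : ℕ, bb n = cc n * (2*(n:ℝ)+1) := by
    intro n
    rw [cc_eq, div_mul_cancel₀ _ (two_n_pos n).ne']
  unfold FF gg
  exact hasDerivAt_tsum_of_isPreconnected
    (u := fun n : ℕ => (r^2) ^ n)
    (summable_geometric_of_lt_one (by positivity) (by nlinarith))
    isOpen_Ioo (convex_Ioo _ _).isPreconnected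
    (fun n y _ => by
      have := (hasDerivAt_pow (2*n+1) y).const_mul (cc n)
      refine this.congr_deriv ?_
      rw [hbb n]
      simp only [Nat.add_sub_cancel]
      push_cast
      ring)
    (fun n y hy => g_bound (abs_lt.mpr hy).le n)
    hxm (summable_cc_pow (hxr.le.trans hr1.le)) hxm

end ArcCosineAux

namespace ArcCosineAux

open Filter Set Topology

lemma ode {x : ℝ} (hx : |x| < 1) : (1 - x^2) * DD x = x * gg x := by
  have hg : HasSum (fun n : ℕ => bb n * x ^ (2*n)) (gg x) := (summable_g hx).hasSum
  have hD : HasSum (fun n : ℕ => 2*(n:ℝ) * bb n * x ^ (2*n-1)) (DD x) :=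
    (summable_dd hx).hasSum
  have hD1 := (hasSum_nat_add_iff'
    (f := fun n : ℕ => 2*(n:ℝ) * bb n * x ^ (2*n-1)) 1).mpr hD
  simp only [Finset.range_one, Finset.sum_singleton, Nat.cast_zero, mul_zero, zero_mul,
    sub_zero] at hD1
  have hfun : (fun n : ℕ => 2*((n:ℕ)+1:ℝ) * bb (n+1) * x ^ (2*(n+1)-1))
      = fun n : ℕ => (2*(n:ℝ)+1) * bb n * x ^ (2*n+1) := by
    funext n
    rw [show 2*(n+1)-1 = 2*n+1 by omega]
    linear_combination x ^ (2*n+1) * bb_rec n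
  have hS : HasSum (fun n : ℕ => (2*(n:ℝ)+1) * bb n * x ^ (2*n+1)) (DD x) := by
    rw [← hfun]
    refine hD1.congr_fun (fun n => ?_)
    push_cast
    ring
  have hxg : HasSum (fun n : ℕ => bb n * x ^ (2*n+1)) (x * gg x) := by
    have := hg.mul_left x
    refine this.congr_fun (fun n => ?_)
    rw [pow_succ]
    ring
  have hx2D : HasSum (fun n : ℕ => 2*(n:ℝ) * bb n * x ^ (2*n+1)) (x^2 * DD x) := by
    have := hD.mul_left (x^2)
    refine this.congr_fun (fun n => ?_)
    cases n with
    | zero => simp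
    | succ m =>
      rw [show 2*(m+1)-1 = 2*m+1 by omega, show 2*(m+1)+1 = (2*m+1)+2 by omega, pow_add]
      ring
  have hsub : HasSum (fun n : ℕ => bb n * x ^ (2*n+1)) (DD x - x^2 * DD x) := by
    have := hS.sub hx2D
    refine this.congr_fun (fun n => ?_)
    ring
  have := hsub.unique hxg
  linear_combination this

lemma gg_eq {x : ℝ} (hx : |x| < 1) : gg x = 1 / Real.sqrt (1 - x^2) := by
  have key : ∀ y : ℝ, |y| < 1 → (0:ℝ) < 1 - y^2 := by
    intro y hy
    nlinarith [abs_nonneg y, sq_abs y]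
  have hphi : ∀ y : ℝ, |y| < 1 →
      HasDerivAt (fun z => Real.sqrt (1 - z^2) * gg z) 0 y := by
    intro y hy
    have h1y := key y hy
    have hsp : 0 < Real.sqrt (1 - y^2) := Real.sqrt_pos.mpr h1y
    have hsq : Real.sqrt (1 - y^2)^2 = 1 - y^2 := Real.sq_sqrt h1y.le
    have hs : HasDerivAt (fun z : ℝ => Real.sqrt (1 - z^2))
        (-y / Real.sqrt (1 - y^2)) y := by
      have hinner : HasDerivAt (fun z : ℝ => 1 - z^2) (-(2*y)) y := by
        simpa using (hasDerivAt_pow 2 y).const_sub 1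
      have := (Real.hasDerivAt_sqrt h1y.ne').comp y hinner
      refine this.congr_deriv ?_
      field_simp
    have hmul := hs.mul (gg_hasDerivAt hy)
    refine hmul.congr_deriv ?_
    have hode := ode hy
    have hss : Real.sqrt (1-y^2) * Real.sqrt (1-y^2) = 1 - y^2 :=
      Real.mul_self_sqrt h1y.le
    field_simp
    linear_combination hode + DD y * hsq
  have hconst : Real.sqrt (1 - x^2) * gg x = 1 := by
    have hmem : ∀ z ∈ Icc (min x 0) (max x 0), |z| < 1 := by
      intro z hz
      have h1 : -|x| ≤ min x 0 := le_min (neg_abs_le x) (neg_nonpos.mpr (abs_nonneg x))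
      have h2 : max x 0 ≤ |x| := max_le (le_abs_self x) (abs_nonneg x)
      rw [abs_lt]
      constructor <;> [linarith [hz.1, hx]; linarith [hz.2, hx]]
    have hcon := constant_of_has_deriv_right_zero
      (f := fun z => Real.sqrt (1 - z^2) * gg z) (a := min x 0) (b := max x 0)
      (fun z hz => ((hphi z (hmem z hz)).continuousAt).continuousWithinAt)
      (fun z hz => (hphi z (hmem z ⟨hz.1, hz.2.le⟩)).hasDerivWithinAt)
    have hx0 := hcon x ⟨min_le_left _ _, le_max_left _ _⟩
    have h00 := hcon 0 ⟨min_le_right _ _, le_max_right _ _⟩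
    have hgg0 : gg 0 = 1 := by
      unfold gg
      rw [tsum_eq_single 0 (fun n hn => by
        rw [zero_pow (by omega : 2*n ≠ 0), mul_zero])]
      simp [bb_zero]
    have h0v : Real.sqrt (1 - (0:ℝ)^2) * gg 0 = 1 := by simp [hgg0]
    rw [hx0, ← h00, h0v]
  have hsp : 0 < Real.sqrt (1 - x^2) := Real.sqrt_pos.mpr (key x hx)
  rw [eq_div_iff hsp.ne']
  linarith [hconst]

lemma FF_eq_arcsin_of_lt {x : ℝ} (hx : |x| < 1) : FF x = Real.arcsin x := by
  have key : ∀ y : ℝ, |y| < 1 → (0:ℝ) < 1 - y^2 := by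
    intro y hy
    nlinarith [abs_nonneg y, sq_abs y]
  have hpsi : ∀ y : ℝ, |y| < 1 →
      HasDerivAt (fun z => FF z - Real.arcsin z) 0 y := by
    intro y hy
    have h1 : y ≠ -1 := by rw [abs_lt] at hy; intro h; rw [h] at hy; linarith [hy.1]
    have h2 : y ≠ 1 := by rw [abs_lt] at hy; intro h; rw [h] at hy; linarith [hy.2]
    have := (FF_hasDerivAt hy).sub (Real.hasDerivAt_arcsin h1 h2)
    refine this.congr_deriv ?_
    rw [gg_eq hy, sub_self]
  have hmem : ∀ z ∈ Icc (min x 0) (max x 0), |z| < 1 := by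
    intro z hz
    have h1 : -|x| ≤ min x 0 := le_min (neg_abs_le x) (neg_nonpos.mpr (abs_nonneg x))
    have h2 : max x 0 ≤ |x| := max_le (le_abs_self x) (abs_nonneg x)
    rw [abs_lt]
    constructor <;> [linarith [hz.1, hx]; linarith [hz.2, hx]]
  have hcon := constant_of_has_deriv_right_zero
    (f := fun z => FF z - Real.arcsin z) (a := min x 0) (b := max x 0)
    (fun z hz => ((hpsi z (hmem z hz)).continuousAt).continuousWithinAt)
    (fun z hz => (hpsi z (hmem z ⟨hz.1, hz.2.le⟩)).hasDerivWithinAt)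
  have hx0 := hcon x ⟨min_le_left _ _, le_max_left _ _⟩
  have h00 := hcon 0 ⟨min_le_right _ _, le_max_right _ _⟩
  have hFF0 : FF 0 = 0 := by
    unfold FF
    have : ∀ n : ℕ, cc n * (0:ℝ) ^ (2*n+1) = 0 := fun n => by
      rw [zero_pow (by omega : 2*n+1 ≠ 0), mul_zero]
    rw [tsum_congr this, tsum_zero]
  have h0v : FF 0 - Real.arcsin 0 = 0 := by simp [hFF0]
  have := hx0.trans (h00.symm.trans h0v)
  linarith [this]

lemma FF_continuousOn : ContinuousOn FF (Icc (-1:ℝ) 1) := by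
  unfold FF
  apply continuousOn_tsum (u := cc)
    (fun n => (continuous_const.mul (continuous_pow (2*n+1))).continuousOn)
    cc_summable
  intro n y hy
  have hy1 : |y| ≤ 1 := abs_le.mpr ⟨hy.1, hy.2⟩
  simp only [Pi.mul_apply]
  rw [Real.norm_eq_abs, abs_mul, abs_pow, abs_of_nonneg (cc_pos n).le]
  calc cc n * |y| ^ (2*n+1) ≤ cc n * 1 :=
        mul_le_mul_of_nonneg_left (pow_le_one₀ (abs_nonneg y) hy1) (cc_pos n).le
    _ = cc n := mul_one _

lemma FF_eq_arcsin {x : ℝ} (hx : x ∈ Icc (-1:ℝ) 1) : FF x = Real.arcsin x := by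
  by_cases h : |x| < 1
  · exact FF_eq_arcsin_of_lt h
  · -- endpoint
    have hcl : x ∈ closure (Ioo (-1:ℝ) 1) := by
      rw [closure_Ioo (by norm_num : (-1:ℝ) ≠ 1)]
      exact hx
    have hnb : (𝓝[Ioo (-1:ℝ) 1] x).NeBot := mem_closure_iff_nhdsWithin_neBot.mp hcl
    have hFt : Tendsto FF (𝓝[Ioo (-1:ℝ) 1] x) (𝓝 (FF x)) :=
      (FF_continuousOn x hx).mono Ioo_subset_Icc_self
    have hAt : Tendsto Real.arcsin (𝓝[Ioo (-1:ℝ) 1] x) (𝓝 (Real.arcsin x)) :=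
      (Real.continuous_arcsin.tendsto x).mono_left nhdsWithin_le_nhds
    have hev : Real.arcsin =ᶠ[𝓝[Ioo (-1:ℝ) 1] x] FF :=
      eventually_nhdsWithin_of_forall fun y hy =>
        (FF_eq_arcsin_of_lt (abs_lt.mpr ⟨hy.1, hy.2⟩)).symm
    exact tendsto_nhds_unique hFt (hAt.congr' hev)

end ArcCosineAux

noncomputable def kappa0 (α : ℝ) : ℝ :=
  (Real.pi - Real.arccos α) / Real.pi

/-- For every α ∈ [-1,1], the zeroth-order arc-cosine kernel equals its
Taylor series. -/
theorem kappa0_eq_taylor_series (α : ℝ) (hα : α ∈ Set.Icc (-1 : ℝ) 1) :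
    kappa0 α = 1 / 2 +
      (1 / Real.pi) * ∑' n : ℕ,
        ((Nat.factorial (2 * n) : ℝ) /
            (2 ^ (2 * n) * (Nat.factorial n : ℝ) ^ 2 * (2 * (n : ℝ) + 1))) *
          α ^ (2 * n + 1) := by
  have hsum : (∑' n : ℕ,
      ((Nat.factorial (2 * n) : ℝ) /
          (2 ^ (2 * n) * (Nat.factorial n : ℝ) ^ 2 * (2 * (n : ℝ) + 1))) *
        α ^ (2 * n + 1)) = ArcCosineAux.FF α := by
    simp only [ArcCosineAux.FF, ArcCosineAux.cc]
  rw [hsum, ArcCosineAux.FF_eq_arcsin hα, kappa0,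
    Real.arccos_eq_pi_div_two_sub_arcsin]
  have hpi := Real.pi_ne_zero
  field_simp
  ring
end

section
/- For any integer p' ≥ 1/(26ε²), the truncated Taylor polynomial Ṗ(α) := 1/2 + (1/π)·Σ_{n=0}^{p'} ((2n)!/(2^{2n}(n!)²(2n+1)))·α^{2n+1} satisfies max_{α∈[-1,1]} |Ṗ(α) - κ₀(α)| ≤ ε. -/
open Real

namespace TruncKappa

noncomputable def aa (n : ℕ) : ℝ :=
  (Nat.factorial (2 * n) : ℝ) / (2 ^ (2 * n) * (Nat.factorial n : ℝ) ^ 2)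

lemma aa_pos (n : ℕ) : 0 < aa n := by
  have h1 : (0:ℝ) < (Nat.factorial (2*n) : ℝ) := by exact_mod_cast Nat.factorial_pos _
  have h2 : (0:ℝ) < (Nat.factorial n : ℝ) := by exact_mod_cast Nat.factorial_pos _
  unfold aa; positivity

lemma aa_zero : aa 0 = 1 := by simp [aa, Nat.factorial]

lemma aa_succ (n : ℕ) : (2*(n:ℝ)+2) * aa (n+1) = (2*(n:ℝ)+1) * aa n := by
  have h2 : 2*(n+1) = (2*n+1)+1 := by ring
  have hf : (Nat.factorial n : ℝ) ≠ 0 := by exact_mod_cast (Nat.factorial_pos n).ne'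
  unfold aa
  rw [h2, Nat.factorial_succ, Nat.factorial_succ, Nat.factorial_succ]
  push_cast
  field_simp
  ring

lemma aa_sq_le (m : ℕ) (hm : 1 ≤ m) : (aa m)^2 * (2*(m:ℝ)+1) ≤ 3/4 := by
  induction m with
  | zero => omega
  | succ k ih =>
    rcases Nat.lt_or_ge k 1 with hk | hk
    · interval_cases k
      norm_num [aa, Nat.factorial]
    · have ihk := ih hk
      have hrec := aa_succ k
      have hpos := aa_pos k
      have hsq := congrArg (fun z : ℝ => z^2) hrec
      simp only [mul_pow] at hsq
      have h24 : (0:ℝ) < (2*(k:ℝ)+2)^2 := by positivity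
      have hprod : ((aa k)^2 * (2*(k:ℝ)+1)) * ((2*(k:ℝ)+1)*(2*(k:ℝ)+3))
          ≤ (3/4) * ((2*(k:ℝ)+1)*(2*(k:ℝ)+3)) :=
        mul_le_mul_of_nonneg_right ihk (by positivity)
      push_cast
      nlinarith [hsq, hprod, h24, sq_nonneg (aa (k+1))]

noncomputable def GG (m : ℕ) (x : ℝ) : ℝ := ∑ n ∈ Finset.range (m+1), aa n * x ^ (2*n)

noncomputable def DD (m : ℕ) (x : ℝ) : ℝ :=
  ∑ n ∈ Finset.range (m+1), aa n * ((2*n : ℕ) * x ^ (2*n-1))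

lemma key_ident (m : ℕ) (x : ℝ) :
    x * GG m x - (1 - x^2) * DD m x = (2*(m:ℝ)+1) * aa m * x^(2*m+1) := by
  induction m with
  | zero => norm_num [GG, DD, aa_zero]
  | succ k ih =>
    have hG : GG (k+1) x = GG k x + aa (k+1) * x ^ (2*(k+1)) := by
      rw [GG, Finset.sum_range_succ]; rfl
    have he : 2*(k+1)-1 = 2*k+1 := by omega
    have hD : DD (k+1) x = DD k x + aa (k+1) * (((2*(k+1) : ℕ) : ℝ) * x ^ (2*k+1)) := by
      rw [DD, Finset.sum_range_succ, he]; rfl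
    have hrec := aa_succ k
    rw [hG, hD]
    push_cast
    linear_combination ih - x^(2*k+1) * hrec

noncomputable def f1 (m : ℕ) (s : ℝ) : ℝ := s^(2*m+1) / Real.sqrt (1 - s^2)
noncomputable def f2 (m : ℕ) (s : ℝ) : ℝ := s^(2*m+1) * Real.arcsin s / Real.sqrt (1 - s^2)
noncomputable def HH (m : ℕ) (x : ℝ) : ℝ := ∫ s in (0:ℝ)..x, f1 m s
noncomputable def KK (m : ℕ) (x : ℝ) : ℝ := ∫ s in (0:ℝ)..x, f2 m s

lemma sqrt_pos_of_mem {s : ℝ} (hs : s ∈ Set.Ioo (-1:ℝ) 1) : 0 < Real.sqrt (1 - s^2) := by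
  apply Real.sqrt_pos.2; nlinarith [hs.1, hs.2]

lemma cont_f1 (m : ℕ) : ContinuousOn (f1 m) (Set.Ioo (-1:ℝ) 1) := by
  apply ContinuousOn.div
  · exact (continuous_pow _).continuousOn
  · exact (Real.continuous_sqrt.comp (by continuity)).continuousOn
  · exact fun s hs => (sqrt_pos_of_mem hs).ne'

lemma cont_f2 (m : ℕ) : ContinuousOn (f2 m) (Set.Ioo (-1:ℝ) 1) := by
  apply ContinuousOn.div
  · exact ((continuous_pow _).mul Real.continuous_arcsin).continuousOn
  · exact (Real.continuous_sqrt.comp (by continuity)).continuousOn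
  · exact fun s hs => (sqrt_pos_of_mem hs).ne'

lemma uIcc_sub {x : ℝ} (hx : x ∈ Set.Ioo (-1:ℝ) 1) :
    Set.uIcc (0:ℝ) x ⊆ Set.Ioo (-1:ℝ) 1 := by
  intro s hs
  rw [Set.mem_uIcc] at hs
  rcases hs with ⟨h1, h2⟩ | ⟨h1, h2⟩
  · exact ⟨by linarith [hx.1], lt_of_le_of_lt h2 hx.2⟩
  · exact ⟨lt_of_lt_of_le hx.1 h1, by linarith [hx.2]⟩

lemma intInt_f1 (m : ℕ) {x : ℝ} (hx : x ∈ Set.Ioo (-1:ℝ) 1) :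
    IntervalIntegrable (f1 m) MeasureTheory.volume 0 x :=
  ((cont_f1 m).mono (uIcc_sub hx)).intervalIntegrable

lemma intInt_f2 (m : ℕ) {x : ℝ} (hx : x ∈ Set.Ioo (-1:ℝ) 1) :
    IntervalIntegrable (f2 m) MeasureTheory.volume 0 x :=
  ((cont_f2 m).mono (uIcc_sub hx)).intervalIntegrable

lemma hasDerivAt_HH (m : ℕ) {x : ℝ} (hx : x ∈ Set.Ioo (-1:ℝ) 1) :
    HasDerivAt (HH m) (f1 m x) x := by
  apply intervalIntegral.integral_hasDerivAt_right (intInt_f1 m hx)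
  · exact ContinuousOn.stronglyMeasurableAtFilter isOpen_Ioo (cont_f1 m) x hx
  · exact (cont_f1 m).continuousAt (Ioo_mem_nhds hx.1 hx.2)

lemma hasDerivAt_KK (m : ℕ) {x : ℝ} (hx : x ∈ Set.Ioo (-1:ℝ) 1) :
    HasDerivAt (KK m) (f2 m x) x := by
  apply intervalIntegral.integral_hasDerivAt_right (intInt_f2 m hx)
  · exact ContinuousOn.stronglyMeasurableAtFilter isOpen_Ioo (cont_f2 m) x hx
  · exact (cont_f2 m).continuousAt (Ioo_mem_nhds hx.1 hx.2)

lemma GG_zero (m : ℕ) : GG m 0 = 1 := by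
  rw [GG, Finset.sum_eq_single_of_mem 0 (Finset.mem_range.2 (Nat.succ_pos m))]
  · simp [aa_zero]
  · intro n _ hn
    simp [zero_pow (by omega : 2*n ≠ 0)]

lemma cont_GG (m : ℕ) : Continuous (GG m) :=
  continuous_finset_sum _ (fun n _ => continuous_const.mul (continuous_pow (2*n)))

lemma hasDerivAt_GG (m : ℕ) (x : ℝ) : HasDerivAt (GG m) (DD m x) x := by
  unfold GG DD
  apply HasDerivAt.fun_sum
  intro n _
  exact (hasDerivAt_pow (2*n) x).const_mul (aa n)

lemma mem_Ioo_of_Icc {t x : ℝ} (ht : t ∈ Set.Ico (0:ℝ) 1) (hx : x ∈ Set.Icc 0 t) :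
    x ∈ Set.Ioo (-1:ℝ) 1 :=
  ⟨by linarith [hx.1], lt_of_le_of_lt hx.2 ht.2⟩

/-- the key closed form for the remainder of the binomial series -/
lemma ident2 (m : ℕ) {t : ℝ} (ht : t ∈ Set.Ico (0:ℝ) 1) :
    1 - Real.sqrt (1 - t^2) * GG m t = (2*(m:ℝ)+1) * aa m * HH m t := by
  have main : ∀ y ∈ Set.Icc (0:ℝ) t,
      1 - Real.sqrt (1 - y^2) * GG m y = (2*(m:ℝ)+1) * aa m * HH m y := by
    apply eq_of_has_deriv_right_eq (f' := fun x => (2*(m:ℝ)+1) * aa m * f1 m x)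
    · -- derivative of LHS on Ico 0 t
      intro x hx
      have hxm : x ∈ Set.Ioo (-1:ℝ) 1 := mem_Ioo_of_Icc ht ⟨hx.1, hx.2.le⟩
      have hne : 1 - x^2 ≠ 0 := by nlinarith [hxm.1, hxm.2]
      have hs := sqrt_pos_of_mem hxm
      have hsq : Real.sqrt (1-x^2) ^ 2 = 1 - x^2 :=
        Real.sq_sqrt (by nlinarith [hxm.1, hxm.2])
      have hin : HasDerivAt (fun x : ℝ => 1 - x^2) (-(2*x)) x := by
        simpa using ((hasDerivAt_pow 2 x).const_sub 1)
      have hsqrt : HasDerivAt (fun x : ℝ => Real.sqrt (1 - x^2))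
          (-(2*x) / (2 * Real.sqrt (1-x^2))) x := hin.sqrt hne
      have hmul := (hsqrt.mul (hasDerivAt_GG m x)).const_sub 1
      have hrne : Real.sqrt (1-x^2) ≠ 0 := hs.ne'
      have e : -(-(2*x) / (2 * Real.sqrt (1-x^2)) * GG m x
            + Real.sqrt (1-x^2) * DD m x) = (2*(m:ℝ)+1) * aa m * f1 m x := by
        have e1 : -(-(2*x) / (2 * Real.sqrt (1-x^2)) * GG m x
              + Real.sqrt (1-x^2) * DD m x)
            = (x * GG m x - Real.sqrt (1-x^2)^2 * DD m x) / Real.sqrt (1-x^2) := by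
          field_simp
          ring
        rw [e1, hsq, key_ident, f1, mul_div_assoc]
      rw [e] at hmul
      exact hmul.hasDerivWithinAt
    · -- derivative of RHS on Ico 0 t
      intro x hx
      have hxm : x ∈ Set.Ioo (-1:ℝ) 1 := mem_Ioo_of_Icc ht ⟨hx.1, hx.2.le⟩
      exact ((hasDerivAt_HH m hxm).const_mul ((2*(m:ℝ)+1) * aa m)).hasDerivWithinAt
    · exact (continuous_const.sub ((Real.continuous_sqrt.comp
        (by continuity)).mul (cont_GG m))).continuousOn
    · intro x hx
      exact (continuousAt_const.mul
        ((hasDerivAt_HH m (mem_Ioo_of_Icc ht hx)).continuousAt)).continuousWithinAt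
    · simp [HH, GG_zero, intervalIntegral.integral_same]
  exact main t ⟨ht.1, le_refl t⟩
noncomputable def cc (n : ℕ) : ℝ :=
  (Nat.factorial (2*n) : ℝ) / (2^(2*n) * (Nat.factorial n : ℝ)^2 * (2*(n:ℝ)+1))

lemma cc_aa (n : ℕ) : cc n * (2*(n:ℝ)+1) = aa n := by
  have hf : (Nat.factorial n : ℝ) ≠ 0 := by exact_mod_cast (Nat.factorial_pos n).ne'
  have h1 : (2*(n:ℝ)+1) ≠ 0 := by positivity
  unfold cc aa
  field_simp

noncomputable def SS (m : ℕ) (x : ℝ) : ℝ := ∑ n ∈ Finset.range (m+1), cc n * x^(2*n+1)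

lemma cont_SS (m : ℕ) : Continuous (SS m) :=
  continuous_finset_sum _ fun n _ => continuous_const.mul (continuous_pow _)

lemma SS_zero (m : ℕ) : SS m 0 = 0 := by
  unfold SS
  apply Finset.sum_eq_zero
  intro n _
  simp [zero_pow (Nat.succ_ne_zero (2*n))]

lemma SS_neg (m : ℕ) (x : ℝ) : SS m (-x) = - SS m x := by
  unfold SS
  rw [← Finset.sum_neg_distrib]
  apply Finset.sum_congr rfl
  intro n _
  rw [Odd.neg_pow (odd_two_mul_add_one n)]
  ring

lemma hasDerivAt_SS (m : ℕ) (x : ℝ) : HasDerivAt (SS m) (GG m x) x := by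
  unfold SS GG
  apply HasDerivAt.fun_sum
  intro n _
  have h := (hasDerivAt_pow (2*n+1) x).const_mul (cc n)
  have he : cc n * (((2*n+1 : ℕ):ℝ) * x^(2*n+1-1)) = aa n * x^(2*n) := by
    have h2 : (2*n+1)-1 = 2*n := by omega
    rw [h2, ← cc_aa n]
    push_cast
    ring
  rwa [he] at h

lemma main_ident (m : ℕ) {t : ℝ} (ht : t ∈ Set.Ico (0:ℝ) 1) :
    Real.arcsin t - SS m t
      = (2*(m:ℝ)+1) * aa m * (Real.arcsin t * HH m t - KK m t) := by
  have main : ∀ y ∈ Set.Icc (0:ℝ) t, Real.arcsin y - SS m y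
      = (2*(m:ℝ)+1) * aa m * (Real.arcsin y * HH m y - KK m y) := by
    apply eq_of_has_deriv_right_eq (f' := fun x => 1 / Real.sqrt (1-x^2) - GG m x)
    · intro x hx
      have hxm := mem_Ioo_of_Icc ht ⟨hx.1, hx.2.le⟩
      have harc := Real.hasDerivAt_arcsin hxm.1.ne' hxm.2.ne
      exact (harc.sub (hasDerivAt_SS m x)).hasDerivWithinAt
    · intro x hx
      have hxm := mem_Ioo_of_Icc ht ⟨hx.1, hx.2.le⟩
      have hx01 : x ∈ Set.Ico (0:ℝ) 1 := ⟨hx.1, lt_of_lt_of_le hx.2 ht.2.le⟩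
      have harc := Real.hasDerivAt_arcsin hxm.1.ne' hxm.2.ne
      have hW := (harc.mul (hasDerivAt_HH m hxm)).sub (hasDerivAt_KK m hxm)
      have hC := hW.const_mul ((2*(m:ℝ)+1) * aa m)
      have hrpos := sqrt_pos_of_mem hxm
      have hrne : Real.sqrt (1-x^2) ≠ 0 := hrpos.ne'
      have h2 := ident2 m hx01
      have e : (2*(m:ℝ)+1) * aa m * (1 / Real.sqrt (1-x^2) * HH m x
            + Real.arcsin x * f1 m x - f2 m x)
          = 1 / Real.sqrt (1-x^2) - GG m x := by
        have e1 : (2*(m:ℝ)+1) * aa m * (1 / Real.sqrt (1-x^2) * HH m x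
              + Real.arcsin x * f1 m x - f2 m x)
            = ((2*(m:ℝ)+1) * aa m * HH m x) / Real.sqrt (1-x^2) := by
          rw [f1, f2]; ring
        rw [e1, ← h2]
        field_simp
      rw [e] at hC
      exact hC.hasDerivWithinAt
    · exact (Real.continuous_arcsin.sub (cont_SS m)).continuousOn
    · intro x hx
      have hxm := mem_Ioo_of_Icc ht hx
      exact (continuousAt_const.mul
        ((Real.continuous_arcsin.continuousAt.mul
          (hasDerivAt_HH m hxm).continuousAt).sub
          (hasDerivAt_KK m hxm).continuousAt)).continuousWithinAt
    · simp [SS_zero, HH, KK, Real.arcsin_zero, intervalIntegral.integral_same]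
  exact main t ⟨ht.1, le_refl t⟩

lemma key_trig {s : ℝ} (h0 : 0 ≤ s) (h1 : s < 1) :
    s * Real.arccos s ≤ Real.sqrt (1 - s^2) := by
  rcases eq_or_lt_of_le h0 with h | h
  · rw [← h]
    simpa using Real.sqrt_nonneg (1 - (0:ℝ)^2)
  · have ha1 : Real.arccos s < π/2 := Real.arccos_lt_pi_div_two.2 h
    have ha0 : 0 < Real.arccos s := Real.arccos_pos.2 h1
    have htan := Real.lt_tan ha0 ha1
    rw [Real.tan_eq_sin_div_cos, Real.sin_arccos,
      Real.cos_arccos (by linarith) h1.le] at htan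
    calc s * Real.arccos s ≤ s * (Real.sqrt (1-s^2)/s) :=
          mul_le_mul_of_nonneg_left htan.le h0
      _ = Real.sqrt (1-s^2) := by field_simp

lemma W_repr (m : ℕ) {t : ℝ} (ht : t ∈ Set.Ico (0:ℝ) 1) :
    Real.arcsin t * HH m t - KK m t
      = ∫ s in (0:ℝ)..t, (Real.arcsin t * f1 m s - f2 m s) := by
  have htm : t ∈ Set.Ioo (-1:ℝ) 1 := ⟨by linarith [ht.1], ht.2⟩
  rw [HH, KK, ← intervalIntegral.integral_const_mul,
    ← intervalIntegral.integral_sub ((intInt_f1 m htm).const_mul _) (intInt_f2 m htm)]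

lemma W_nonneg (m : ℕ) {t : ℝ} (ht : t ∈ Set.Ico (0:ℝ) 1) :
    0 ≤ Real.arcsin t * HH m t - KK m t := by
  rw [W_repr m ht]
  apply intervalIntegral.integral_nonneg ht.1
  intro s hs
  have hsm : s ∈ Set.Ioo (-1:ℝ) 1 := ⟨by linarith [hs.1], lt_of_le_of_lt hs.2 ht.2⟩
  have hr := sqrt_pos_of_mem hsm
  have e : Real.arcsin t * f1 m s - f2 m s
      = s^(2*m+1) * (Real.arcsin t - Real.arcsin s) / Real.sqrt (1-s^2) := by
    rw [f1, f2]; ring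
  rw [e]
  apply div_nonneg _ hr.le
  apply mul_nonneg (pow_nonneg hs.1 _)
  have := Real.monotone_arcsin hs.2
  linarith

lemma W_le (m : ℕ) {t : ℝ} (ht : t ∈ Set.Ico (0:ℝ) 1) :
    Real.arcsin t * HH m t - KK m t ≤ 1/(2*(m:ℝ)+1) := by
  rw [W_repr m ht]
  have htm : t ∈ Set.Ioo (-1:ℝ) 1 := ⟨by linarith [ht.1], ht.2⟩
  have step : (∫ s in (0:ℝ)..t, (Real.arcsin t * f1 m s - f2 m s))
      ≤ ∫ s in (0:ℝ)..t, s^(2*m) := by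
    apply intervalIntegral.integral_mono_on ht.1
    · exact ((intInt_f1 m htm).const_mul _).sub (intInt_f2 m htm)
    · exact (continuous_pow _).intervalIntegrable _ _
    · intro s hs
      have hs1 : s < 1 := lt_of_le_of_lt hs.2 ht.2
      have hsm : s ∈ Set.Ioo (-1:ℝ) 1 := ⟨by linarith [hs.1], hs1⟩
      have hr := sqrt_pos_of_mem hsm
      have e : Real.arcsin t * f1 m s - f2 m s
          = s^(2*m+1) * (Real.arcsin t - Real.arcsin s) / Real.sqrt (1-s^2) := by
        rw [f1, f2]; ring
      rw [e, div_le_iff₀ hr]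
      have h1 : Real.arcsin t - Real.arcsin s ≤ Real.arccos s := by
        rw [Real.arccos_eq_pi_div_two_sub_arcsin]
        have := Real.arcsin_le_pi_div_two t
        linarith
      have h3 := key_trig hs.1 hs1
      calc s^(2*m+1) * (Real.arcsin t - Real.arcsin s)
          ≤ s^(2*m+1) * Real.arccos s :=
            mul_le_mul_of_nonneg_left h1 (pow_nonneg hs.1 _)
        _ = s^(2*m) * (s * Real.arccos s) := by ring
        _ ≤ s^(2*m) * Real.sqrt (1-s^2) :=
            mul_le_mul_of_nonneg_left h3 (pow_nonneg hs.1 _)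
  have hval : (∫ s in (0:ℝ)..t, s^(2*m)) = t^(2*m+1)/(2*(m:ℝ)+1) := by
    rw [integral_pow]
    push_cast
    norm_num
  have hle1 : t^(2*m+1) ≤ 1 := pow_le_one₀ ht.1 ht.2.le
  have hden : (0:ℝ) < 2*(m:ℝ)+1 := by positivity
  calc (∫ s in (0:ℝ)..t, (Real.arcsin t * f1 m s - f2 m s))
      ≤ ∫ s in (0:ℝ)..t, s^(2*m) := step
    _ = t^(2*m+1)/(2*(m:ℝ)+1) := hval
    _ ≤ 1/(2*(m:ℝ)+1) := by gcongr

lemma err_Ico (m : ℕ) {t : ℝ} (ht : t ∈ Set.Ico (0:ℝ) 1) :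
    |SS m t - Real.arcsin t| ≤ aa m := by
  have h := main_ident m ht
  have h0 := W_nonneg m ht
  have h1 := W_le m ht
  have hC : (0:ℝ) < 2*(m:ℝ)+1 := by positivity
  have haa := aa_pos m
  have hprod := mul_le_mul_of_nonneg_left h1 (le_of_lt (mul_pos hC haa))
  have hsimp : (2*(m:ℝ)+1) * aa m * (1/(2*(m:ℝ)+1)) = aa m := by field_simp
  rw [abs_sub_comm, abs_of_nonneg
    (by nlinarith [mul_nonneg (le_of_lt (mul_pos hC haa)) h0])]
  nlinarith

lemma err_Icc01 (m : ℕ) {t : ℝ} (ht : t ∈ Set.Icc (0:ℝ) 1) :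
    |SS m t - Real.arcsin t| ≤ aa m := by
  rcases lt_or_eq_of_le ht.2 with h | h
  · exact err_Ico m ⟨ht.1, h⟩
  · subst h
    have hcont : ContinuousAt (fun x => |SS m x - Real.arcsin x|) 1 :=
      (((cont_SS m).sub Real.continuous_arcsin).abs).continuousAt
    have htend := hcont.continuousWithinAt (s := Set.Iio (1:ℝ))
    apply le_of_tendsto htend
    filter_upwards [Ioo_mem_nhdsLT_of_mem
      (show (1:ℝ) ∈ Set.Ioc (0:ℝ) 1 from ⟨zero_lt_one, le_refl 1⟩)] with x hx
    exact err_Ico m ⟨hx.1.le, hx.2⟩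

lemma err_full (m : ℕ) {t : ℝ} (ht : t ∈ Set.Icc (-1:ℝ) 1) :
    |SS m t - Real.arcsin t| ≤ aa m := by
  rcases le_or_gt 0 t with h | h
  · exact err_Icc01 m ⟨h, ht.2⟩
  · have h1 : -t ∈ Set.Icc (0:ℝ) 1 := ⟨by linarith, by linarith [ht.1]⟩
    have h2 := err_Icc01 m h1
    rw [SS_neg, Real.arcsin_neg] at h2
    rwa [show -SS m t - -Real.arcsin t = -(SS m t - Real.arcsin t) by ring,
      abs_neg] at h2

end TruncKappa
/-- the degree-(2p'+1) truncated Taylor polynomial of κ₀ is an ε-uniform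
approximation of κ₀ on [-1,1] whenever p' ≥ 1/(26ε²). -/
theorem truncated_taylor_approx_kappa0 (ε : ℝ) (hε : 0 < ε) (p' : ℕ)
    (hp' : 1 / (26 * ε ^ 2) ≤ (p' : ℝ)) :
    ∀ α ∈ Set.Icc (-1 : ℝ) 1,
      |(1 / 2 + (1 / Real.pi) * ∑ n ∈ Finset.range (p' + 1),
          ((Nat.factorial (2 * n) : ℝ) /
              (2 ^ (2 * n) * (Nat.factorial n : ℝ) ^ 2 * (2 * (n : ℝ) + 1))) *
            α ^ (2 * n + 1)) - kappa0 α| ≤ ε := by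
  intro α hα
  have hπ := Real.pi_pos
  have hπne : Real.pi ≠ 0 := hπ.ne'
  -- the sum is `TruncKappa.SS p' α`
  have hsum : (∑ n ∈ Finset.range (p' + 1),
      ((Nat.factorial (2 * n) : ℝ) /
          (2 ^ (2 * n) * (Nat.factorial n : ℝ) ^ 2 * (2 * (n : ℝ) + 1))) *
        α ^ (2 * n + 1)) = TruncKappa.SS p' α := rfl
  have hk : kappa0 α = 1/2 + Real.arcsin α / Real.pi := by
    unfold kappa0
    rw [Real.arccos_eq_pi_div_two_sub_arcsin]
    field_simp
    ring
  have hexpr : (1 / 2 + (1 / Real.pi) * TruncKappa.SS p' α) - kappa0 α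
      = (TruncKappa.SS p' α - Real.arcsin α) / Real.pi := by
    rw [hk]; field_simp; ring
  rw [hsum, hexpr, abs_div, abs_of_pos hπ]
  -- numeric part : `aa p' ≤ π * ε`
  have hp0 : (0:ℝ) < 1 / (26 * ε ^ 2) := by positivity
  have hpnat : 1 ≤ p' := by
    by_contra h
    interval_cases p'
    · simp at hp'
      have : (0:ℝ) < (ε^2)⁻¹ * 26⁻¹ := by positivity
      linarith
  have hP1 : (1:ℝ) ≤ (p' : ℝ) := by exact_mod_cast hpnat
  have hPpos : (0:ℝ) < (p' : ℝ) := by linarith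
  have h26 : (1:ℝ) ≤ (p' : ℝ) * (26 * ε ^ 2) := by
    rw [div_le_iff₀ (by positivity)] at hp'
    linarith
  have hsq := TruncKappa.aa_sq_le p' hpnat
  have haa := TruncKappa.aa_pos p'
  have hpi2 : Real.pi ^ 2 > 9.869 := by
    nlinarith [Real.pi_gt_d6]
  have h1 : (TruncKappa.aa p')^2 ≤ (Real.pi * ε)^2 := by
    have hd : (0:ℝ) < 2*(p':ℝ)+1 := by positivity
    -- aa² ≤ 3/(4(2P+1)) ≤ π²/(26P) ≤ π²ε²
    nlinarith [hsq, h26, hpi2, sq_nonneg ε, pow_pos hε 2, mul_pos hPpos (pow_pos hε 2)]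
  have h2 : TruncKappa.aa p' ≤ Real.pi * ε := by
    have := Real.sqrt_le_sqrt h1
    rwa [Real.sqrt_sq haa.le, Real.sqrt_sq (by positivity)] at this
  have h3 := TruncKappa.err_full p' hα
  rw [div_le_iff₀ hπ]
  calc |TruncKappa.SS p' α - Real.arcsin α| ≤ TruncKappa.aa p' := h3
    _ ≤ Real.pi * ε := h2
    _ = ε * Real.pi := by ring
end

section
/- For any integer p ≥ 1/(9ε^{2/3}), the truncated Taylor polynomial P(α) := 1/π + α/2 + (1/π)·Σ_{n=0}^{p} ((2n)!/(2^{2n}(n!)²(2n+1)(2n+2)))·α^{2n+2} satisfies max_{α∈[-1,1]} |P(α) - κ₁(α)| ≤ ε. -/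
open Real

namespace TTK

/-- normalized central binomial coefficient -/
noncomputable def Cb (n : ℕ) : ℝ := (Nat.centralBinom n : ℝ) / 4 ^ n

/-- Taylor coefficients of √(1-α²)+α·arcsin α - 1 -/
noncomputable def cc (n : ℕ) : ℝ := Cb n / ((2 * (n : ℝ) + 1) * (2 * (n : ℝ) + 2))

lemma Cb_pos (n : ℕ) : 0 < Cb n :=
  div_pos (by exact_mod_cast Nat.centralBinom_pos n) (by positivity)

lemma Cb_succ (n : ℕ) : (2 * (n : ℝ) + 2) * Cb (n + 1) = (2 * (n : ℝ) + 1) * Cb n := by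
  have h := Nat.succ_mul_centralBinom_succ n
  have h' : ((n : ℝ) + 1) * (Nat.centralBinom (n + 1) : ℝ)
      = 2 * (2 * (n : ℝ) + 1) * (Nat.centralBinom n : ℝ) := by exact_mod_cast h
  have h4 : (4 : ℝ) ^ (n + 1) = 4 * 4 ^ n := by ring
  unfold Cb
  rw [h4]
  field_simp
  nlinarith [h', pow_pos (show (0:ℝ) < 4 by norm_num) n]

lemma Cb_sq (n : ℕ) : (Cb n) ^ 2 * (3 * (n : ℝ) + 1) ≤ 1 := by
  induction n with
  | zero => simp [Cb, Nat.centralBinom]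
  | succ n ih =>
      have hr := Cb_succ n
      have hp := Cb_pos n
      have hp' := Cb_pos (n + 1)
      have hn : (0:ℝ) ≤ (n:ℝ) := Nat.cast_nonneg n
      have h2 : (2*(n:ℝ)+2)^2 * Cb (n+1)^2 = (2*(n:ℝ)+1)^2 * Cb n ^2 := by
        have := congrArg (fun x => x^2) hr
        simpa [mul_pow] using this
      have h3 : ((2*(n:ℝ)+1)^2*(3*(n:ℝ)+4)) * Cb n ^ 2 ≤ ((2*(n:ℝ)+2)^2*(3*(n:ℝ)+1)) * Cb n ^2 := by
        apply mul_le_mul_of_nonneg_right _ (sq_nonneg _)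
        nlinarith
      have h4 : (2*(n:ℝ)+2)^2 * (Cb n ^2 * (3*(n:ℝ)+1)) ≤ (2*(n:ℝ)+2)^2 * 1 :=
        mul_le_mul_of_nonneg_left ih (by positivity)
      have h5 : (0:ℝ) < (2*(n:ℝ)+2)^2 := by positivity
      push_cast
      nlinarith [h2, h3, h4, h5]

lemma Cb_le_one (n : ℕ) : Cb n ≤ 1 := by
  have h := Cb_sq n
  have := Cb_pos n
  nlinarith [Nat.cast_nonneg (α := ℝ) n]


/-- master summability: coefficients linearly bounded, exponents at least n -/
lemma summable_aux {y : ℝ} (hy : |y| < 1) (a : ℕ → ℝ) (ha : ∀ n, |a n| ≤ 3 * ((n : ℝ) + 1))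
    (e : ℕ → ℕ) (he : ∀ n, n ≤ e n) : Summable fun n => a n * y ^ e n := by
  have hy0 : (0:ℝ) ≤ |y| := abs_nonneg y
  have hgeo : Summable fun n : ℕ => ((n:ℝ) + 1) * |y| ^ n := by
    have h1 : Summable fun n : ℕ => (n:ℝ) ^ 1 * |y| ^ n :=
      summable_pow_mul_geometric_of_norm_lt_one 1 (by rwa [Real.norm_eq_abs, abs_abs])
    have h2 : Summable fun n : ℕ => |y| ^ n := summable_geometric_of_lt_one hy0 hy
    simpa [add_mul, pow_one] using h1.add h2
  apply Summable.of_norm_bounded (hgeo.mul_left 3)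
  intro n
  have : ‖a n * y ^ e n‖ = |a n| * |y| ^ e n := by
    rw [norm_mul, Real.norm_eq_abs, Real.norm_eq_abs, abs_pow]
  rw [this]
  have hpow : |y| ^ e n ≤ |y| ^ n := pow_le_pow_of_le_one hy0 hy.le (he n)
  calc |a n| * |y| ^ e n ≤ (3 * ((n:ℝ)+1)) * |y| ^ n := by
        apply mul_le_mul (ha n) hpow (by positivity) (by positivity)
    _ = 3 * (((n:ℝ)+1) * |y| ^ n) := by ring

lemma summable_deriv_aux {r : ℝ} (h0 : 0 ≤ r) (hr : r < 1) :
    Summable fun n : ℕ => (n : ℝ) * r ^ (n - 1) := by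
  rw [← summable_nat_add_iff 1]
  have h1 : Summable fun n : ℕ => (n:ℝ) ^ 1 * r ^ n :=
    summable_pow_mul_geometric_of_norm_lt_one 1 (by rwa [Real.norm_eq_abs, abs_of_nonneg h0])
  have h2 : Summable fun n : ℕ => r ^ n := summable_geometric_of_lt_one h0 hr
  refine (h1.add h2).congr fun n => ?_
  push_cast
  simp [add_mul, pow_one]

/-- the generating function of Cb -/
noncomputable def H (y : ℝ) : ℝ := ∑' n : ℕ, Cb n * y ^ n

lemma summable_H_at_zero : Summable fun n : ℕ => Cb n * (0:ℝ) ^ n := by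
  apply summable_of_ne_finset_zero (s := {0})
  intro n hn
  have : n ≠ 0 := by simpa using hn
  simp [zero_pow this]

lemma H_zero : H 0 = 1 := by
  unfold H
  rw [tsum_eq_single 0]
  · simp [Cb, Nat.centralBinom]
  · intro n hn; simp [zero_pow hn]

lemma H_hasDerivAt {y : ℝ} (hy : |y| < 1) :
    HasDerivAt H (∑' n : ℕ, Cb n * ((n : ℝ) * y ^ (n - 1))) y := by
  set r : ℝ := (1 + |y|) / 2 with hrdef
  have hy0 : (0:ℝ) ≤ |y| := abs_nonneg y
  have hr0 : (0:ℝ) ≤ r := by positivity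
  have hr1 : r < 1 := by rw [hrdef]; linarith
  have hyr : |y| < r := by rw [hrdef]; linarith
  unfold H
  apply hasDerivAt_tsum_of_isPreconnected (g := fun (n : ℕ) z => Cb n * z ^ n)
    (g' := fun (n : ℕ) z => Cb n * ((n:ℝ) * z ^ (n - 1))) (u := fun n : ℕ => (n:ℝ) * r ^ (n - 1))
    (summable_deriv_aux hr0 hr1) (isOpen_Ioo (a := -r) (b := r))
    ((convex_Ioo _ _).isPreconnected) ?_ ?_ ?_ summable_H_at_zero ?_
  · intro n z hz
    exact (hasDerivAt_pow n z).const_mul (Cb n)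
  · intro n z hz
    have hz' : |z| ≤ r := by
      rw [abs_le]; exact ⟨(Set.mem_Ioo.mp hz).1.le, (Set.mem_Ioo.mp hz).2.le⟩
    have : ‖Cb n * ((n:ℝ) * z ^ (n-1))‖ = Cb n * ((n:ℝ) * |z| ^ (n-1)) := by
      rw [norm_mul, Real.norm_eq_abs, Real.norm_eq_abs, abs_of_pos (Cb_pos n), abs_mul,
        Nat.abs_cast, abs_pow]
    rw [this]
    calc Cb n * ((n:ℝ) * |z| ^ (n-1)) ≤ 1 * ((n:ℝ) * r ^ (n-1)) := by
          apply mul_le_mul (Cb_le_one n) _ (by positivity) one_pos.le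
          exact mul_le_mul_of_nonneg_left (pow_le_pow_left₀ (abs_nonneg z) hz' _) (Nat.cast_nonneg n)
      _ = (n:ℝ) * r ^ (n-1) := one_mul _
  · exact Set.mem_Ioo.mpr ⟨by linarith, by positivity⟩
  · exact Set.mem_Ioo.mpr ⟨by cases abs_lt.mp hyr; linarith, (abs_lt.mp hyr).2⟩

lemma summable_D {y : ℝ} (hy : |y| < 1) :
    Summable fun n : ℕ => Cb n * ((n : ℝ) * y ^ (n - 1)) := by
  apply Summable.of_norm_bounded (summable_deriv_aux (abs_nonneg y) hy)
  intro n
  rw [norm_mul, Real.norm_eq_abs, Real.norm_eq_abs, abs_of_pos (Cb_pos n), abs_mul,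
    Nat.abs_cast, abs_pow]
  calc Cb n * ((n:ℝ) * |y| ^ (n-1)) ≤ 1 * ((n:ℝ) * |y| ^ (n-1)) :=
        mul_le_mul_of_nonneg_right (Cb_le_one n) (by positivity)
    _ = (n:ℝ) * |y| ^ (n-1) := one_mul _

lemma abs_Cb_le (n : ℕ) : |Cb n| ≤ 3 * ((n:ℝ) + 1) := by
  rw [abs_of_pos (Cb_pos n)]
  have := Cb_le_one n
  have : (0:ℝ) ≤ (n:ℝ) := Nat.cast_nonneg n
  nlinarith [Cb_le_one n]

lemma key_sum {y : ℝ} (hy : |y| < 1) :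
    2 * (1 - y) * (∑' n : ℕ, Cb n * ((n : ℝ) * y ^ (n - 1))) = H y := by
  have sD := summable_D hy
  have s1 : Summable fun n : ℕ => Cb n * y ^ n :=
    summable_aux hy Cb abs_Cb_le id (fun n => le_refl n)
  have s2 : Summable fun n : ℕ => (2*(n:ℝ)+1) * Cb n * y ^ n := by
    apply summable_aux hy _ _ id (fun n => le_refl n)
    intro n
    rw [abs_mul, abs_of_nonneg (by positivity : (0:ℝ) ≤ 2*(n:ℝ)+1), abs_of_pos (Cb_pos n)]
    nlinarith [Cb_le_one n, Cb_pos n, Nat.cast_nonneg (α := ℝ) n]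
  have s3 : Summable fun n : ℕ => (2*(n:ℝ)+1) * Cb n * y ^ (n+1) := by
    apply summable_aux hy _ _ (fun n => n + 1) (fun n => Nat.le_succ n)
    intro n
    rw [abs_mul, abs_of_nonneg (by positivity : (0:ℝ) ≤ 2*(n:ℝ)+1), abs_of_pos (Cb_pos n)]
    nlinarith [Cb_le_one n, Cb_pos n, Nat.cast_nonneg (α := ℝ) n]
  have s4 : Summable fun n : ℕ => 2*(n:ℝ) * Cb n * y ^ n := by
    apply summable_aux hy _ _ id (fun n => le_refl n)
    intro n
    rw [abs_mul, abs_of_nonneg (by positivity : (0:ℝ) ≤ 2*(n:ℝ)), abs_of_pos (Cb_pos n)]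
    nlinarith [Cb_le_one n, Cb_pos n, Nat.cast_nonneg (α := ℝ) n]
  -- step 1: 2 * D = ∑ (2n+1) Cb n y^n
  have h2D : 2 * (∑' n : ℕ, Cb n * ((n:ℝ) * y ^ (n-1)))
      = ∑' n : ℕ, (2*(n:ℝ)+1) * Cb n * y ^ n := by
    rw [Summable.tsum_eq_zero_add sD]
    simp only [Nat.cast_zero, zero_mul, mul_zero, zero_add, Nat.add_sub_cancel]
    rw [← tsum_mul_left]
    refine tsum_congr fun n => ?_
    push_cast
    linear_combination y ^ n * Cb_succ n
  -- step 2: ∑ 2n Cb n y^n = ∑ (2n+1) Cb n y^(n+1)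
  have hshift : (∑' n : ℕ, 2*(n:ℝ) * Cb n * y ^ n)
      = ∑' n : ℕ, (2*(n:ℝ)+1) * Cb n * y ^ (n+1) := by
    rw [Summable.tsum_eq_zero_add s4]
    simp only [Nat.cast_zero, mul_zero, zero_mul, zero_add]
    refine tsum_congr fun n => ?_
    push_cast
    linear_combination y ^ (n+1) * Cb_succ n
  -- step 3: assemble
  have hyt : y * (∑' n : ℕ, (2*(n:ℝ)+1) * Cb n * y ^ n)
      = ∑' n : ℕ, (2*(n:ℝ)+1) * Cb n * y ^ (n+1) := by
    rw [← tsum_mul_left]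
    refine tsum_congr fun n => by ring
  have hsplit : (∑' n : ℕ, (2*(n:ℝ)+1) * Cb n * y ^ n)
      = (∑' n : ℕ, 2*(n:ℝ) * Cb n * y ^ n) + ∑' n : ℕ, Cb n * y ^ n := by
    rw [← Summable.tsum_add s4 s1]
    refine tsum_congr fun n => by ring
  have expand : 2 * (1 - y) * (∑' n : ℕ, Cb n * ((n:ℝ) * y ^ (n-1)))
      = 2 * (∑' n : ℕ, Cb n * ((n:ℝ) * y ^ (n-1)))
        - y * (2 * (∑' n : ℕ, Cb n * ((n:ℝ) * y ^ (n-1)))) := by ring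
  rw [expand, h2D, hyt, hsplit]
  unfold H
  linarith [hshift]

/-- constancy helper on (-1,1) -/
lemma eq_at_zero_of_deriv0 {f : ℝ → ℝ} (hf : ∀ y ∈ Set.Ioo (-1:ℝ) 1, HasDerivAt f 0 y)
    {y : ℝ} (hy : y ∈ Set.Ioo (-1:ℝ) 1) : f y = f 0 := by
  obtain ⟨hy1, hy2⟩ := hy
  have hcont : ∀ z ∈ Set.Ioo (-1:ℝ) 1, ContinuousAt f z := fun z hz => (hf z hz).continuousAt
  rcases le_or_gt y 0 with h | h
  · have key := constant_of_has_deriv_right_zero (f := f) (a := y) (b := 0)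
      (fun z hz => (hcont z ⟨lt_of_lt_of_le hy1 hz.1, lt_of_le_of_lt hz.2 one_pos⟩).continuousWithinAt)
      (fun z hz => ((hf z ⟨lt_of_lt_of_le hy1 hz.1, lt_of_le_of_lt hz.2.le one_pos⟩)).hasDerivWithinAt)
    exact (key 0 ⟨h, le_refl 0⟩).symm
  · have key := constant_of_has_deriv_right_zero (f := f) (a := 0) (b := y)
      (fun z hz => (hcont z ⟨lt_of_lt_of_le (by norm_num) hz.1, lt_of_le_of_lt hz.2 hy2⟩).continuousWithinAt)
      (fun z hz => ((hf z ⟨lt_of_lt_of_le (by norm_num) hz.1, lt_of_lt_of_le hz.2 hy2.le⟩)).hasDerivWithinAt)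
    exact key y ⟨h.le, le_refl y⟩

lemma H_sq {y : ℝ} (hy : |y| < 1) : (1 - y) * H y ^ 2 = 1 := by
  have hmem : y ∈ Set.Ioo (-1:ℝ) 1 := by
    obtain ⟨h1, h2⟩ := abs_lt.mp hy; exact ⟨h1, h2⟩
  have hF : ∀ z ∈ Set.Ioo (-1:ℝ) 1, HasDerivAt (fun w => (1 - w) * H w ^ 2) 0 z := by
    intro z hz
    have hz' : |z| < 1 := abs_lt.mpr ⟨hz.1, hz.2⟩
    have hH := H_hasDerivAt hz'
    have h1 : HasDerivAt (fun w : ℝ => 1 - w) (-1) z := by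
      simpa using (hasDerivAt_id z).const_sub 1
    have hmul := h1.mul (hH.pow 2)
    refine hmul.congr_deriv (Eq.symm ?_)
    have hk := key_sum hz'
    show (0:ℝ) = _
    norm_num
    linear_combination (-(H z)) * hk
  have := eq_at_zero_of_deriv0 hF hmem
  rw [this, H_zero]
  norm_num

lemma H_eq {y : ℝ} (h0 : 0 ≤ y) (hy : y < 1) : H y = 1 / Real.sqrt (1 - y) := by
  have hy' : |y| < 1 := by rw [abs_of_nonneg h0]; exact hy
  have hsq := H_sq hy'
  have h1y : (0:ℝ) < 1 - y := by linarith
  have hs : (0:ℝ) < Real.sqrt (1 - y) := Real.sqrt_pos.mpr h1y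
  have hHnn : 0 ≤ H y := tsum_nonneg fun n => mul_nonneg (Cb_pos n).le (pow_nonneg h0 n)
  have hkey : (Real.sqrt (1 - y) * H y) ^ 2 = 1 := by
    rw [mul_pow, Real.sq_sqrt h1y.le]; linarith
  have hpos : 0 ≤ Real.sqrt (1 - y) * H y := by positivity
  have key : Real.sqrt (1 - y) * H y = 1 := by
    have ha : Real.sqrt ((Real.sqrt (1 - y) * H y) ^ 2) = Real.sqrt 1 := by rw [hkey]
    rwa [Real.sqrt_sq hpos, Real.sqrt_one] at ha
  rw [eq_div_iff (ne_of_gt hs)]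
  linarith [key]

lemma sq_abs_lt {x : ℝ} (hx : |x| < 1) : x ^ 2 < 1 := by
  have := abs_nonneg x
  nlinarith [sq_abs x]

lemma h2_eq {x : ℝ} (hx : |x| < 1) :
    (∑' n : ℕ, Cb n * x ^ (2 * n)) = 1 / Real.sqrt (1 - x ^ 2) := by
  have h1 : (∑' n : ℕ, Cb n * x ^ (2 * n)) = H (x ^ 2) :=
    tsum_congr fun n => by rw [pow_mul]
  rw [h1, H_eq (sq_nonneg x) (sq_abs_lt hx)]

/-- the arcsin series -/
noncomputable def h1 (x : ℝ) : ℝ := ∑' n : ℕ, (Cb n / (2 * (n:ℝ) + 1)) * x ^ (2 * n + 1)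

/-- the integrated series -/
noncomputable def hh (x : ℝ) : ℝ := ∑' n : ℕ, cc n * x ^ (2 * n + 2)

lemma abs_coef1_le (n : ℕ) : |Cb n / (2 * (n:ℝ) + 1)| ≤ 1 := by
  have h1 : (0:ℝ) < 2 * (n:ℝ) + 1 := by positivity
  rw [abs_div, abs_of_pos (Cb_pos n), abs_of_pos h1, div_le_one h1]
  nlinarith [Cb_le_one n, Nat.cast_nonneg (α := ℝ) n]

lemma cc_pos (n : ℕ) : 0 < cc n := by
  unfold cc
  have h1 : (0:ℝ) < 2 * (n:ℝ) + 1 := by positivity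
  have h2 : (0:ℝ) < 2 * (n:ℝ) + 2 := by positivity
  exact div_pos (Cb_pos n) (by positivity)

lemma cc_le (n : ℕ) : cc n ≤ 1 / ((n:ℝ) + 1) ^ 2 := by
  unfold cc
  have h1 : (0:ℝ) < 2 * (n:ℝ) + 1 := by positivity
  have h2 : (0:ℝ) < 2 * (n:ℝ) + 2 := by positivity
  have hn : (0:ℝ) ≤ (n:ℝ) := Nat.cast_nonneg n
  rw [div_le_div_iff₀ (by positivity) (by positivity)]
  nlinarith [Cb_le_one n, Cb_pos n]

lemma summable_cc : Summable cc := by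
  have base : Summable fun n : ℕ => 1 / ((n:ℝ)) ^ 2 := by
    simpa using Real.summable_one_div_nat_pow.mpr one_lt_two
  have shifted : Summable fun n : ℕ => 1 / ((n:ℝ) + 1) ^ 2 := by
    have := (summable_nat_add_iff (f := fun n : ℕ => 1 / ((n:ℝ)) ^ 2) 1).mpr base
    refine this.congr fun n => by push_cast; ring
  exact shifted.of_nonneg_of_le (fun n => (cc_pos n).le) cc_le

lemma h1_hasDerivAt {x : ℝ} (hx : |x| < 1) :
    HasDerivAt h1 (∑' n : ℕ, Cb n * x ^ (2 * n)) x := by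
  set r : ℝ := (1 + |x|) / 2 with hrdef
  have hx0 : (0:ℝ) ≤ |x| := abs_nonneg x
  have hr0 : (0:ℝ) ≤ r := by positivity
  have hr1 : r < 1 := by rw [hrdef]; linarith
  have hxr : |x| < r := by rw [hrdef]; linarith
  unfold h1
  apply hasDerivAt_tsum_of_isPreconnected
    (g := fun (n : ℕ) z => (Cb n / (2 * (n:ℝ) + 1)) * z ^ (2 * n + 1))
    (g' := fun (n : ℕ) z => Cb n * z ^ (2 * n)) (u := fun n : ℕ => r ^ n) (y₀ := 0)
    (summable_geometric_of_lt_one hr0 hr1) (isOpen_Ioo (a := -r) (b := r))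
    ((convex_Ioo _ _).isPreconnected) ?_ ?_ ?_ ?_ ?_
  · intro n z hz
    have hp := (hasDerivAt_pow (2 * n + 1) z).const_mul (Cb n / (2 * (n:ℝ) + 1))
    have hne : (2 * (n:ℝ) + 1) ≠ 0 := by positivity
    refine hp.congr_deriv ?_
    simp only [Nat.add_sub_cancel]
    push_cast
    field_simp
  · intro n z hz
    have hz' : |z| ≤ r := by
      rw [abs_le]; exact ⟨(Set.mem_Ioo.mp hz).1.le, (Set.mem_Ioo.mp hz).2.le⟩
    rw [norm_mul, Real.norm_eq_abs, Real.norm_eq_abs, abs_of_pos (Cb_pos n), abs_pow]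
    calc Cb n * |z| ^ (2 * n) ≤ 1 * r ^ (2 * n) := by
          apply mul_le_mul (Cb_le_one n) (pow_le_pow_left₀ (abs_nonneg z) hz' _)
            (by positivity) one_pos.le
      _ = (r ^ 2) ^ n := by rw [one_mul, pow_mul]
      _ ≤ r ^ n := pow_le_pow_left₀ (by positivity) (by nlinarith) n
  · exact Set.mem_Ioo.mpr ⟨by linarith, by positivity⟩
  · apply summable_zero.congr
    intro n
    simp [zero_pow (Nat.succ_ne_zero (2 * n))]
  · exact Set.mem_Ioo.mpr ⟨(abs_lt.mp hxr).1, (abs_lt.mp hxr).2⟩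

lemma h1_zero : h1 0 = 0 := by
  unfold h1
  have hz : ∀ n : ℕ, Cb n / (2 * (n:ℝ) + 1) * (0:ℝ) ^ (2 * n + 1) = 0 := by
    intro n; simp [zero_pow (Nat.succ_ne_zero (2 * n))]
  rw [tsum_congr hz, tsum_zero]

lemma h1_eq_arcsin {x : ℝ} (hx : x ∈ Set.Ioo (-1:ℝ) 1) : h1 x = Real.arcsin x := by
  have hf : ∀ z ∈ Set.Ioo (-1:ℝ) 1, HasDerivAt (fun w => h1 w - Real.arcsin w) 0 z := by
    intro z hz
    have hz' : |z| < 1 := abs_lt.mpr ⟨hz.1, hz.2⟩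
    have ha := Real.hasDerivAt_arcsin (ne_of_gt hz.1) (ne_of_lt hz.2)
    have := (h1_hasDerivAt hz').sub ha
    rwa [h2_eq hz', sub_self] at this
  have := eq_at_zero_of_deriv0 hf hx
  rw [h1_zero, Real.arcsin_zero, sub_zero] at this
  linarith [this]

lemma hh_hasDerivAt {x : ℝ} (hx : |x| < 1) : HasDerivAt hh (h1 x) x := by
  set r : ℝ := (1 + |x|) / 2 with hrdef
  have hx0 : (0:ℝ) ≤ |x| := abs_nonneg x
  have hr0 : (0:ℝ) ≤ r := by positivity
  have hr1 : r < 1 := by rw [hrdef]; linarith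
  have hxr : |x| < r := by rw [hrdef]; linarith
  unfold hh h1
  apply hasDerivAt_tsum_of_isPreconnected
    (g := fun (n : ℕ) z => cc n * z ^ (2 * n + 2))
    (g' := fun (n : ℕ) z => (Cb n / (2 * (n:ℝ) + 1)) * z ^ (2 * n + 1))
    (u := fun n : ℕ => r ^ n) (y₀ := 0)
    (summable_geometric_of_lt_one hr0 hr1) (isOpen_Ioo (a := -r) (b := r))
    ((convex_Ioo _ _).isPreconnected) ?_ ?_ ?_ ?_ ?_
  · intro n z hz
    have hp := (hasDerivAt_pow (2 * n + 2) z).const_mul (cc n)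
    refine hp.congr_deriv ?_
    unfold cc
    have h1 : (2 * (n:ℝ) + 1) ≠ 0 := by positivity
    have h2 : (2 * (n:ℝ) + 2) ≠ 0 := by positivity
    push_cast
    field_simp
  · intro n z hz
    have hz' : |z| ≤ r := by
      rw [abs_le]; exact ⟨(Set.mem_Ioo.mp hz).1.le, (Set.mem_Ioo.mp hz).2.le⟩
    rw [norm_mul, Real.norm_eq_abs, Real.norm_eq_abs, abs_pow]
    calc |Cb n / (2 * (n:ℝ) + 1)| * |z| ^ (2 * n + 1) ≤ 1 * r ^ (2 * n + 1) := by
          apply mul_le_mul (abs_coef1_le n) (pow_le_pow_left₀ (abs_nonneg z) hz' _)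
            (by positivity) one_pos.le
      _ = (r ^ 2) ^ n * r := by rw [one_mul, pow_succ, pow_mul]
      _ ≤ r ^ n * 1 := by
          apply mul_le_mul (pow_le_pow_left₀ (by positivity) (by nlinarith) n) hr1.le hr0
            (by positivity)
      _ = r ^ n := mul_one _
  · exact Set.mem_Ioo.mpr ⟨by linarith, by positivity⟩
  · apply summable_zero.congr
    intro n
    simp [zero_pow (show 2 * n + 2 ≠ 0 by omega)]
  · exact Set.mem_Ioo.mpr ⟨(abs_lt.mp hxr).1, (abs_lt.mp hxr).2⟩

lemma hh_zero : hh 0 = 0 := by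
  unfold hh
  have hz : ∀ n : ℕ, cc n * (0:ℝ) ^ (2 * n + 2) = 0 := by
    intro n; simp [zero_pow (show 2 * n + 2 ≠ 0 by omega)]
  rw [tsum_congr hz, tsum_zero]

/-- the target function -/
noncomputable def gg (x : ℝ) : ℝ := Real.sqrt (1 - x ^ 2) + x * Real.arcsin x - 1

lemma gg_hasDerivAt {x : ℝ} (hx : x ∈ Set.Ioo (-1:ℝ) 1) : HasDerivAt gg (Real.arcsin x) x := by
  have hx' : |x| < 1 := abs_lt.mpr ⟨hx.1, hx.2⟩
  have hu : (0:ℝ) < 1 - x ^ 2 := by nlinarith [sq_abs x, abs_nonneg x]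
  have hs : (0:ℝ) < Real.sqrt (1 - x ^ 2) := Real.sqrt_pos.mpr hu
  have hinner : HasDerivAt (fun w : ℝ => 1 - w ^ 2) (-(2 * x)) x := by
    simpa using (hasDerivAt_pow 2 x).const_sub 1
  have hsqrt : HasDerivAt (fun w : ℝ => Real.sqrt (1 - w ^ 2))
      (1 / (2 * Real.sqrt (1 - x ^ 2)) * (-(2 * x))) x :=
    (Real.hasDerivAt_sqrt (ne_of_gt hu)).comp x hinner
  have ha := Real.hasDerivAt_arcsin (ne_of_gt hx.1) (ne_of_lt hx.2)
  have hmul : HasDerivAt (fun w : ℝ => w * Real.arcsin w)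
      (1 * Real.arcsin x + x * (1 / Real.sqrt (1 - x ^ 2))) x := (hasDerivAt_id x).mul ha
  have htot := (hsqrt.add hmul).sub_const 1
  refine htot.congr_deriv ?_
  field_simp
  ring

lemma hh_eq_on_Ioo {x : ℝ} (hx : x ∈ Set.Ioo (-1:ℝ) 1) : hh x = gg x := by
  have hf : ∀ z ∈ Set.Ioo (-1:ℝ) 1, HasDerivAt (fun w => hh w - gg w) 0 z := by
    intro z hz
    have hz' : |z| < 1 := abs_lt.mpr ⟨hz.1, hz.2⟩
    have := (hh_hasDerivAt hz').sub (gg_hasDerivAt hz)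
    rwa [h1_eq_arcsin hz, sub_self] at this
  have := eq_at_zero_of_deriv0 hf hx
  have hg0 : gg 0 = 0 := by simp [gg]
  rw [hh_zero, hg0, sub_zero] at this
  linarith [this]

lemma hh_continuousOn : ContinuousOn hh (Set.Icc (-1:ℝ) 1) := by
  unfold hh
  apply continuousOn_tsum (u := cc)
    (fun n => (continuous_const.mul (continuous_pow (2 * n + 2))).continuousOn) summable_cc
  intro n x hx
  obtain ⟨hx1, hx2⟩ := Set.mem_Icc.mp hx
  have hle : |x| ≤ 1 := abs_le.mpr ⟨hx1, hx2⟩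
  show ‖cc n * x ^ (2 * n + 2)‖ ≤ cc n
  rw [norm_mul, Real.norm_eq_abs, Real.norm_eq_abs, abs_of_pos (cc_pos n), abs_pow]
  calc cc n * |x| ^ (2 * n + 2) ≤ cc n * 1 := by
        apply mul_le_mul_of_nonneg_left _ (cc_pos n).le
        exact pow_le_one₀ (abs_nonneg x) hle
    _ = cc n := mul_one _

lemma gg_continuous : Continuous gg := by
  unfold gg
  exact ((Real.continuous_sqrt.comp (by continuity)).add
    (continuous_id.mul Real.continuous_arcsin)).sub continuous_const

lemma hh_eq_on_Icc {x : ℝ} (hx : x ∈ Set.Icc (-1:ℝ) 1) : hh x = gg x := by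
  have hclo : closure (Set.Ioo (-1:ℝ) 1) = Set.Icc (-1:ℝ) 1 := closure_Ioo (by norm_num)
  have hxc : x ∈ closure (Set.Ioo (-1:ℝ) 1) := by rw [hclo]; exact hx
  have hne : (nhdsWithin x (Set.Ioo (-1:ℝ) 1)).NeBot :=
    mem_closure_iff_nhdsWithin_neBot.mp hxc
  have t1 : Filter.Tendsto hh (nhdsWithin x (Set.Ioo (-1:ℝ) 1)) (nhds (hh x)) :=
    (hh_continuousOn x hx).mono Set.Ioo_subset_Icc_self
  have t1' : Filter.Tendsto gg (nhdsWithin x (Set.Ioo (-1:ℝ) 1)) (nhds (hh x)) := by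
    apply t1.congr'
    filter_upwards [eventually_mem_nhdsWithin] with y hy
    exact hh_eq_on_Ioo hy
  have t2 : Filter.Tendsto gg (nhdsWithin x (Set.Ioo (-1:ℝ) 1)) (nhds (gg x)) :=
    gg_continuous.continuousAt.continuousWithinAt
  exact tendsto_nhds_unique t1' t2

/-- telescoping tail bound -/
lemma tail_le (p : ℕ) : (∑' n : ℕ, cc (n + (p + 1))) ≤ Cb (p + 1) / (3 * (2 * (p:ℝ) + 1)) := by
  set e : ℕ → ℝ := fun i => Cb (i + p + 1) / (3 * (2 * (i:ℝ) + 2 * (p:ℝ) + 1)) with hedef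
  have he_nonneg : ∀ i, 0 ≤ e i := by
    intro i
    apply div_nonneg (Cb_pos _).le (by positivity)
  have hterm : ∀ i : ℕ, cc (i + (p + 1)) ≤ e i - e (i + 1) := by
    intro i
    set m : ℕ := i + p + 1 with hmdef
    have hm1 : (1:ℝ) ≤ (m:ℝ) := by
      have : 1 ≤ m := by omega
      exact_mod_cast this
    have hmi : (m:ℝ) = (i:ℝ) + (p:ℝ) + 1 := by push_cast [hmdef]; ring
    have hsucc := Cb_succ m
    have hpos := Cb_pos m
    have hpos' := Cb_pos (m + 1)
    have hcc : cc (i + (p+1)) = Cb m / ((2 * (m:ℝ) + 1) * (2 * (m:ℝ) + 2)) := by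
      have : i + (p + 1) = m := by omega
      rw [this, cc]
    have he0 : e i = Cb m / (3 * (2 * (m:ℝ) - 1)) := by
      rw [hedef]
      simp only
      rw [show i + p + 1 = m from rfl, hmi]
      ring_nf
    have he1 : e (i + 1) = Cb (m + 1) / (3 * (2 * (m:ℝ) + 1)) := by
      rw [hedef]
      simp only
      rw [show i + 1 + p + 1 = m + 1 by omega, hmi]
      push_cast
      ring_nf
    rw [hcc, he0, he1]
    have d1 : (0:ℝ) < 2 * (m:ℝ) - 1 := by linarith
    have d2 : (0:ℝ) < 2 * (m:ℝ) + 1 := by linarith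
    have d3 : (0:ℝ) < 2 * (m:ℝ) + 2 := by linarith
    rw [div_sub_div _ _ (by positivity) (by positivity), div_le_div_iff₀ (by positivity) (by positivity)]
    nlinarith [hsucc, hpos, hpos', mul_pos d1 d2, mul_pos d2 d3, mul_pos (mul_pos d1 d2) d3,
      mul_pos hpos (mul_pos d1 (mul_pos d2 d3))]
  have key : ∀ N : ℕ, (∑ i ∈ Finset.range N, cc (i + (p + 1))) ≤ Cb (p + 1) / (3 * (2 * (p:ℝ) + 1)) := by
    intro N
    have h1 : (∑ i ∈ Finset.range N, cc (i + (p + 1))) ≤ ∑ i ∈ Finset.range N, (e i - e (i + 1)) :=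
      Finset.sum_le_sum fun i _ => hterm i
    have h2 : (∑ i ∈ Finset.range N, (e i - e (i + 1))) = e 0 - e N := Finset.sum_range_sub' e N
    have h3 : e 0 = Cb (p + 1) / (3 * (2 * (p:ℝ) + 1)) := by
      rw [hedef]; norm_num
    calc (∑ i ∈ Finset.range N, cc (i + (p + 1))) ≤ e 0 - e N := h1.trans (le_of_eq h2)
      _ ≤ e 0 := by linarith [he_nonneg N]
      _ = _ := h3
  exact Real.tsum_le_of_sum_range_le (fun n => (cc_pos _).le) key

lemma numeric (ε : ℝ) (hε : 0 < ε) (p : ℕ) (hp : 1 / (9 * ε ^ ((2:ℝ)/3)) ≤ (p:ℝ)) :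
    (1 / Real.pi) * (Cb (p + 1) / (3 * (2 * (p:ℝ) + 1))) ≤ ε := by
  have hq : (0:ℝ) < ε ^ ((2:ℝ)/3) := Real.rpow_pos_of_pos hε _
  have hp0 : (0:ℝ) < (p:ℝ) := lt_of_lt_of_le (by positivity) hp
  have hp1 : (1:ℝ) ≤ (p:ℝ) := by
    have : 0 < p := by exact_mod_cast hp0
    exact_mod_cast this
  have hspos : 0 < Real.sqrt (p:ℝ) := Real.sqrt_pos.mpr hp0
  have hq' : 1 / (9 * (p:ℝ)) ≤ ε ^ ((2:ℝ)/3) := by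
    rw [div_le_iff₀ (by positivity)]
    rw [div_le_iff₀ (by positivity)] at hp
    nlinarith
  have hε3 : (1 / (9 * (p:ℝ))) ^ ((3:ℝ)/2) ≤ ε := by
    have h1 : (1/(9*(p:ℝ))) ^ ((3:ℝ)/2) ≤ (ε ^ ((2:ℝ)/3)) ^ ((3:ℝ)/2) :=
      Real.rpow_le_rpow (by positivity) hq' (by norm_num)
    have h2 : (ε ^ ((2:ℝ)/3)) ^ ((3:ℝ)/2) = ε := by
      rw [← Real.rpow_mul hε.le]
      norm_num
    linarith
  have hrpow : (1 / (9 * (p:ℝ))) ^ ((3:ℝ)/2) = 1 / (27 * (p:ℝ) * Real.sqrt p) := by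
    have ha : (0:ℝ) < 1 / (9 * (p:ℝ)) := by positivity
    rw [show (3:ℝ)/2 = 1 + 1/2 by norm_num, Real.rpow_add ha, Real.rpow_one,
      ← Real.sqrt_eq_rpow]
    rw [show 1 / (9 * (p:ℝ)) = (9 * (p:ℝ))⁻¹ from one_div _, Real.sqrt_inv,
      Real.sqrt_mul (by norm_num : (0:ℝ) ≤ 9),
      show Real.sqrt 9 = 3 by rw [show (9:ℝ) = 3 ^ 2 by norm_num, Real.sqrt_sq (by norm_num : (0:ℝ) ≤ 3)]]
    rw [eq_div_iff (by positivity)]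
    field_simp
    ring
  have hCb : Cb (p + 1) ≤ 1 / Real.sqrt (3 * (p:ℝ) + 4) := by
    have hsq := Cb_sq (p + 1)
    push_cast at hsq
    have h34 : (0:ℝ) < 3 * (p:ℝ) + 4 := by positivity
    have hs : (0:ℝ) < Real.sqrt (3 * (p:ℝ) + 4) := Real.sqrt_pos.mpr h34
    rw [le_div_iff₀ hs]
    have hsq34 : (Real.sqrt (3 * (p:ℝ) + 4)) ^ 2 = 3 * (p:ℝ) + 4 := Real.sq_sqrt h34.le
    have hcb := Cb_pos (p + 1)
    nlinarith [mul_pos hcb hs, sq_nonneg (Cb (p+1) * Real.sqrt (3*(p:ℝ)+4) - 1),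
      sq_nonneg (Cb (p+1) * Real.sqrt (3*(p:ℝ)+4) + 1)]
  have hπ := Real.pi_gt_three
  have hπ0 := Real.pi_pos
  have e1 : (3/2) * Real.sqrt (p:ℝ) ≤ Real.sqrt (3 * (p:ℝ) + 4) := by
    have h3s : Real.sqrt (3 * (p:ℝ)) = Real.sqrt 3 * Real.sqrt p :=
      Real.sqrt_mul (by norm_num) _
    have hs3 : (3:ℝ)/2 ≤ Real.sqrt 3 := by
      nlinarith [Real.sq_sqrt (show (0:ℝ) ≤ 3 by norm_num), Real.sqrt_nonneg (3:ℝ)]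
    calc (3/2) * Real.sqrt (p:ℝ) ≤ Real.sqrt 3 * Real.sqrt p :=
          mul_le_mul_of_nonneg_right hs3 hspos.le
      _ = Real.sqrt (3 * (p:ℝ)) := h3s.symm
      _ ≤ Real.sqrt (3 * (p:ℝ) + 4) := Real.sqrt_le_sqrt (by linarith)
  have hbig : 27 * (p:ℝ) * Real.sqrt p ≤ Real.pi * (3 * (2 * (p:ℝ) + 1)) * Real.sqrt (3 * (p:ℝ) + 4) := by
    have B : 27 * (p:ℝ) * Real.sqrt p ≤ Real.pi * (3 * (2 * (p:ℝ) + 1)) * ((3/2) * Real.sqrt p) := by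
      have c : 27 * (p:ℝ) ≤ Real.pi * (3 * (2 * (p:ℝ) + 1)) * (3/2) := by nlinarith
      calc 27 * (p:ℝ) * Real.sqrt p ≤ (Real.pi * (3 * (2 * (p:ℝ) + 1)) * (3/2)) * Real.sqrt p :=
            mul_le_mul_of_nonneg_right c hspos.le
        _ = Real.pi * (3 * (2 * (p:ℝ) + 1)) * ((3/2) * Real.sqrt p) := by ring
    have A : Real.pi * (3 * (2 * (p:ℝ) + 1)) * ((3/2) * Real.sqrt p)
        ≤ Real.pi * (3 * (2 * (p:ℝ) + 1)) * Real.sqrt (3 * (p:ℝ) + 4) :=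
      mul_le_mul_of_nonneg_left e1 (by positivity)
    linarith
  have final : (1 / Real.pi) * (Cb (p + 1) / (3 * (2 * (p:ℝ) + 1))) ≤ 1 / (27 * (p:ℝ) * Real.sqrt p) := by
    have hrw : (1 / Real.pi) * (Cb (p + 1) / (3 * (2 * (p:ℝ) + 1)))
        = Cb (p + 1) / (Real.pi * (3 * (2 * (p:ℝ) + 1))) := by
      field_simp
    rw [hrw, div_le_div_iff₀ (by positivity) (by positivity), one_mul]
    have hs : (0:ℝ) < Real.sqrt (3 * (p:ℝ) + 4) := Real.sqrt_pos.mpr (by positivity)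
    calc Cb (p + 1) * (27 * (p:ℝ) * Real.sqrt p)
        ≤ (1 / Real.sqrt (3 * (p:ℝ) + 4)) * (27 * (p:ℝ) * Real.sqrt p) :=
          mul_le_mul_of_nonneg_right hCb (by positivity)
      _ ≤ Real.pi * (3 * (2 * (p:ℝ) + 1)) := by
          rw [div_mul_eq_mul_div, one_mul, div_le_iff₀ hs]
          exact hbig
  calc (1 / Real.pi) * (Cb (p + 1) / (3 * (2 * (p:ℝ) + 1)))
      ≤ 1 / (27 * (p:ℝ) * Real.sqrt p) := final
    _ = (1 / (9 * (p:ℝ))) ^ ((3:ℝ)/2) := hrpow.symm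
    _ ≤ ε := hε3

end TTK

/-- the degree-(2p+2) truncated Taylor polynomial of κ₁ is an ε-uniform
approximation of κ₁ on [-1,1] whenever p ≥ 1/(9ε^{2/3}). -/
theorem truncated_taylor_approx_kappa1 (ε : ℝ) (hε : 0 < ε) (p : ℕ)
    (hp : 1 / (9 * ε ^ ((2 : ℝ) / 3)) ≤ (p : ℝ)) :
    ∀ α ∈ Set.Icc (-1 : ℝ) 1,
      |(1 / Real.pi + α / 2 + (1 / Real.pi) * ∑ n ∈ Finset.range (p + 1),
          ((Nat.factorial (2 * n) : ℝ) /
              (2 ^ (2 * n) * (Nat.factorial n : ℝ) ^ 2 * (2 * (n : ℝ) + 1) * (2 * (n : ℝ) + 2))) *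
            α ^ (2 * n + 2)) - kappa1 α| ≤ ε := by
  intro α hα
  obtain ⟨hα1, hα2⟩ := hα
  have hαabs : |α| ≤ 1 := abs_le.mpr ⟨hα1, hα2⟩
  have hπ0 := Real.pi_pos
  have hcoef : ∀ n : ℕ, ((Nat.factorial (2 * n) : ℝ) /
      (2 ^ (2 * n) * (Nat.factorial n : ℝ) ^ 2 * (2 * (n : ℝ) + 1) * (2 * (n : ℝ) + 2)))
      = TTK.cc n := by
    intro n
    have h := Nat.choose_mul_factorial_mul_factorial (show n ≤ 2 * n by omega)
    have h2 : 2 * n - n = n := by omega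
    rw [h2] at h
    have hfac : ((2 * n).factorial : ℝ) = (Nat.centralBinom n : ℝ) * (Nat.factorial n : ℝ) ^ 2 := by
      rw [Nat.centralBinom_eq_two_mul_choose]
      push_cast [← h]
      ring
    rw [hfac]
    unfold TTK.cc TTK.Cb
    have h4 : (2:ℝ) ^ (2 * n) = 4 ^ n := by rw [pow_mul]; norm_num
    rw [h4]
    have hf0 : (Nat.factorial n : ℝ) ≠ 0 := Nat.cast_ne_zero.mpr (Nat.factorial_ne_zero n)
    have hd1 : (2 * (n:ℝ) + 1) ≠ 0 := by positivity
    have hd2 : (2 * (n:ℝ) + 2) ≠ 0 := by positivity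
    have h40 : (4:ℝ) ^ n ≠ 0 := by positivity
    field_simp
  have hsumc : ∀ n : ℕ, |TTK.cc n * α ^ (2 * n + 2)| ≤ TTK.cc n := by
    intro n
    rw [abs_mul, abs_of_pos (TTK.cc_pos n), abs_pow]
    calc TTK.cc n * |α| ^ (2 * n + 2) ≤ TTK.cc n * 1 :=
          mul_le_mul_of_nonneg_left (pow_le_one₀ (abs_nonneg α) hαabs) (TTK.cc_pos n).le
      _ = TTK.cc n := mul_one _
  have hsum : Summable fun n : ℕ => TTK.cc n * α ^ (2 * n + 2) :=
    Summable.of_norm_bounded TTK.summable_cc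
      (fun n => by rw [Real.norm_eq_abs]; exact hsumc n)
  have hsplit := Summable.sum_add_tsum_nat_add (f := fun n : ℕ => TTK.cc n * α ^ (2 * n + 2)) (p + 1) hsum
  have hk : kappa1 α = 1 / Real.pi + α / 2 + (1 / Real.pi) * TTK.hh α := by
    rw [TTK.hh_eq_on_Icc (Set.mem_Icc.mpr ⟨hα1, hα2⟩)]
    unfold kappa1 TTK.gg
    rw [Real.arccos_eq_pi_div_two_sub_arcsin]
    field_simp
    ring
  set T : ℝ := ∑' n : ℕ, TTK.cc (n + (p + 1)) * α ^ (2 * (n + (p + 1)) + 2) with hT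
  have hA : (1 / Real.pi + α / 2 + (1 / Real.pi) * ∑ n ∈ Finset.range (p + 1),
      ((Nat.factorial (2 * n) : ℝ) /
        (2 ^ (2 * n) * (Nat.factorial n : ℝ) ^ 2 * (2 * (n : ℝ) + 1) * (2 * (n : ℝ) + 2))) *
        α ^ (2 * n + 2)) - kappa1 α = -((1 / Real.pi) * T) := by
    rw [hk]
    have hrwsum : (∑ n ∈ Finset.range (p + 1),
        ((Nat.factorial (2 * n) : ℝ) /
          (2 ^ (2 * n) * (Nat.factorial n : ℝ) ^ 2 * (2 * (n : ℝ) + 1) * (2 * (n : ℝ) + 2))) *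
          α ^ (2 * n + 2))
        = ∑ n ∈ Finset.range (p + 1), TTK.cc n * α ^ (2 * n + 2) :=
      Finset.sum_congr rfl fun n _ => by rw [hcoef n]
    rw [hrwsum]
    have hhh : TTK.hh α = (∑ n ∈ Finset.range (p + 1), TTK.cc n * α ^ (2 * n + 2)) + T := by
      rw [TTK.hh, hT]
      exact hsplit.symm
    rw [hhh]
    ring
  rw [hA, abs_neg, abs_mul, abs_of_pos (show (0:ℝ) < 1 / Real.pi by positivity)]
  have hTle : |T| ≤ ∑' n : ℕ, TTK.cc (n + (p + 1)) := by
    have hsumtail : Summable fun n : ℕ => TTK.cc (n + (p + 1)) :=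
      (summable_nat_add_iff (p + 1)).mpr TTK.summable_cc
    have hb := tsum_of_norm_bounded hsumtail.hasSum
      (f := fun n : ℕ => TTK.cc (n + (p + 1)) * α ^ (2 * (n + (p + 1)) + 2))
      (fun n => by rw [Real.norm_eq_abs]; exact hsumc (n + (p + 1)))
    rw [hT]
    simpa using hb
  calc (1 / Real.pi) * |T| ≤ (1 / Real.pi) * (TTK.Cb (p + 1) / (3 * (2 * (p:ℝ) + 1))) := by
        apply mul_le_mul_of_nonneg_left _ (by positivity)
        exact hTle.trans (TTK.tail_le p)
    _ ≤ ε := TTK.numeric ε hε p hp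
end

section
/- The tail of the Taylor series of κ₀ satisfies: for every positive integer p', (1/π)·Σ_{n=p'+1}^∞ ((2n)!/(2^{2n}(n!)²(2n+1))) ≤ (e/(√2·π²))·(1/√p'). -/
open Real

lemma cb_sq_bound (m : ℕ) : (Nat.centralBinom m) ^ 2 * (3 * m + 1) ≤ 16 ^ m := by
  induction m with
  | zero => simp [Nat.centralBinom]
  | succ m ih =>
    have key := Nat.succ_mul_centralBinom_succ m
    have hpos : 0 < (m + 1) ^ 2 := by positivity
    refine Nat.le_of_mul_le_mul_left ?_ hpos
    have e1 : (m + 1) ^ 2 * (Nat.centralBinom (m + 1) ^ 2 * (3 * (m + 1) + 1))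
        = ((m + 1) * Nat.centralBinom (m + 1)) ^ 2 * (3 * m + 4) := by ring
    rw [e1, key]
    have h1 : (2 * (2 * m + 1) * Nat.centralBinom m) ^ 2 * (3 * m + 4)
        = (4 * (2 * m + 1) ^ 2 * (3 * m + 4)) * Nat.centralBinom m ^ 2 := by ring
    rw [h1]
    have h2 : 4 * (2 * m + 1) ^ 2 * (3 * m + 4) ≤ 16 * ((m + 1) ^ 2 * (3 * m + 1)) := by
      nlinarith [Nat.zero_le m]
    calc (4 * (2 * m + 1) ^ 2 * (3 * m + 4)) * Nat.centralBinom m ^ 2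
        ≤ (16 * ((m + 1) ^ 2 * (3 * m + 1))) * Nat.centralBinom m ^ 2 :=
          Nat.mul_le_mul_right _ h2
      _ = (16 * (m + 1) ^ 2) * (Nat.centralBinom m ^ 2 * (3 * m + 1)) := by ring
      _ ≤ (16 * (m + 1) ^ 2) * 16 ^ m := Nat.mul_le_mul_left _ ih
      _ = (m + 1) ^ 2 * 16 ^ (m + 1) := by ring

/-- real bound: centralBinom m * sqrt (3m+1) ≤ 4^m -/
lemma cb_real_bound (m : ℕ) :
    (Nat.centralBinom m : ℝ) * Real.sqrt (3 * m + 1) ≤ 4 ^ m := by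
  have h1 : ((Nat.centralBinom m : ℝ) * Real.sqrt (3 * m + 1)) ^ 2 ≤ ((4:ℝ) ^ m) ^ 2 := by
    have hs : Real.sqrt (3 * m + 1) ^ 2 = 3 * m + 1 := Real.sq_sqrt (by positivity)
    have := cb_sq_bound m
    have hc : ((Nat.centralBinom m : ℝ)) ^ 2 * (3 * m + 1) ≤ 16 ^ m := by
      exact_mod_cast this
    calc ((Nat.centralBinom m : ℝ) * Real.sqrt (3 * m + 1)) ^ 2
        = (Nat.centralBinom m : ℝ) ^ 2 * (Real.sqrt (3 * m + 1) ^ 2) := by ring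
      _ = (Nat.centralBinom m : ℝ) ^ 2 * (3 * m + 1) := by rw [hs]
      _ ≤ 16 ^ m := hc
      _ = ((4:ℝ) ^ m) ^ 2 := by
          rw [show (16:ℝ) = 4 ^ 2 by norm_num, ← pow_mul, mul_comm, pow_mul]
  have h2 : (0:ℝ) ≤ 4 ^ m := by positivity
  exact le_of_pow_le_pow_left₀ two_ne_zero h2 h1

/-- the term of the series -/
noncomputable def kterm (m : ℕ) : ℝ :=
  (Nat.factorial (2 * m) : ℝ) /
    (2 ^ (2 * m) * (Nat.factorial m : ℝ) ^ 2 * (2 * (m : ℝ) + 1))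

lemma kterm_nonneg (m : ℕ) : 0 ≤ kterm m := by
  unfold kterm; positivity

lemma kterm_eq (m : ℕ) :
    kterm m = (Nat.centralBinom m : ℝ) / (4 ^ m * (2 * (m : ℝ) + 1)) := by
  unfold kterm
  have hfact : (Nat.centralBinom m) * Nat.factorial m * Nat.factorial m
      = Nat.factorial (2 * m) := by
    rw [Nat.centralBinom]
    have hle : m ≤ 2 * m := by omega
    have := Nat.choose_mul_factorial_mul_factorial hle
    simpa [Nat.two_mul, Nat.add_sub_cancel] using this
  have hfr : (Nat.factorial (2 * m) : ℝ)
      = (Nat.centralBinom m : ℝ) * (Nat.factorial m : ℝ) ^ 2 := by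
    rw [← hfact]; push_cast; ring
  have h4 : (2:ℝ) ^ (2 * m) = 4 ^ m := by
    rw [pow_mul]; norm_num
  rw [hfr, h4]
  have hm : ((Nat.factorial m : ℝ)) ^ 2 ≠ 0 := by positivity
  field_simp

/-- telescoping bound for m ≥ 1 -/
lemma kterm_telescope (m : ℕ) (hm : 1 ≤ m) :
    kterm m ≤ 1 / Real.sqrt (3 * m - 2) - 1 / Real.sqrt (3 * m + 1) := by
  have hm1 : (1:ℝ) ≤ (m:ℝ) := by exact_mod_cast hm
  set s := Real.sqrt (3 * (m:ℝ) - 2) with hs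
  set s' := Real.sqrt (3 * (m:ℝ) + 1) with hs'
  have hb : (1:ℝ) ≤ 3 * (m:ℝ) - 2 := by linarith
  have hs_sq : s ^ 2 = 3 * (m:ℝ) - 2 := Real.sq_sqrt (by linarith)
  have hs'_sq : s' ^ 2 = 3 * (m:ℝ) + 1 := Real.sq_sqrt (by linarith)
  have hs_pos : 0 < s := Real.sqrt_pos.mpr (by linarith)
  have hs'_pos : 0 < s' := Real.sqrt_pos.mpr (by linarith)
  have hss' : s ≤ s' := Real.sqrt_le_sqrt (by linarith)
  have h2m : (0:ℝ) < 2 * (m:ℝ) + 1 := by linarith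
  -- kterm m ≤ 1 / (s' * (2m+1))
  have hstep1 : kterm m ≤ 1 / (s' * (2 * (m:ℝ) + 1)) := by
    rw [kterm_eq]
    have hcb := cb_real_bound m
    rw [div_le_div_iff₀ (by positivity) (by positivity)]
    have : (Nat.centralBinom m : ℝ) * (s' * (2 * (m:ℝ) + 1))
        = ((Nat.centralBinom m : ℝ) * s') * (2 * (m:ℝ) + 1) := by ring
    rw [this]
    have h4m : (0:ℝ) < 4 ^ m := by positivity
    calc ((Nat.centralBinom m : ℝ) * s') * (2 * (m:ℝ) + 1)
        ≤ (4:ℝ) ^ m * (2 * (m:ℝ) + 1) := by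
          apply mul_le_mul_of_nonneg_right _ (le_of_lt h2m)
          simpa [hs'] using hcb
      _ = 1 * (4 ^ m * (2 * (m:ℝ) + 1)) := by ring
  -- 1/(s'(2m+1)) ≤ 1/s - 1/s'
  have hstep2 : 1 / (s' * (2 * (m:ℝ) + 1)) ≤ 1 / s - 1 / s' := by
    have hdiff : 1 / s - 1 / s' = (s' - s) / (s * s') := by
      field_simp
    rw [hdiff]
    have hsum_pos : 0 < s + s' := by linarith
    have hprod : (s' - s) * (s' + s) = 3 := by nlinarith
    have hdiff2 : s' - s = 3 / (s + s') := by
      field_simp; nlinarith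
    rw [hdiff2, div_div]
    rw [div_le_div_iff₀ (by positivity) (by positivity)]
    -- 1 * (s * s' * (s+s')) ≤ 3 * (s' * (2m+1))
    have hss'le : s * s' ≤ s' ^ 2 := by nlinarith
    nlinarith [mul_le_mul_of_nonneg_right hss' (le_of_lt hs'_pos)]
  linarith

lemma tail_sum_bound (p' : ℕ) (hp' : 1 ≤ p') :
    ∑' n : ℕ, kterm (p' + 1 + n) ≤ 1 / Real.sqrt (3 * p' + 1) := by
  set g : ℕ → ℝ := fun n => 1 / Real.sqrt (3 * (p' + 1 + n : ℕ) - 2) with hg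
  apply Real.tsum_le_of_sum_range_le (fun n => kterm_nonneg _)
  intro N
  have hstep : ∀ n, kterm (p' + 1 + n) ≤ g n - g (n + 1) := by
    intro n
    have h1 : 1 ≤ p' + 1 + n := by omega
    have := kterm_telescope (p' + 1 + n) h1
    have hcast : ((p' + 1 + (n + 1) : ℕ) : ℝ) = ((p' + 1 + n : ℕ) : ℝ) + 1 := by
      push_cast; ring
    have hgn1 : g (n + 1) = 1 / Real.sqrt (3 * ((p' + 1 + n : ℕ) : ℝ) + 1) := by
      simp only [hg, hcast]; ring_nf
    rw [hg]
    simp only [hgn1]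
    convert this using 3
  calc ∑ n ∈ Finset.range N, kterm (p' + 1 + n)
      ≤ ∑ n ∈ Finset.range N, (g n - g (n + 1)) :=
        Finset.sum_le_sum (fun n _ => hstep n)
    _ = g 0 - g N := Finset.sum_range_sub' g N
    _ ≤ g 0 := by
        have : 0 ≤ g N := by positivity
        linarith
    _ = 1 / Real.sqrt (3 * p' + 1) := by
        simp only [hg]
        norm_num
        congr 1
        push_cast
        ring

/-- tail bound for the Taylor series of κ₀. -/
theorem kappa0_taylor_tail_bound (p' : ℕ) (hp' : 1 ≤ p') :
    (1 / Real.pi) * ∑' n : ℕ,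
        ((Nat.factorial (2 * (p' + 1 + n)) : ℝ) /
          (2 ^ (2 * (p' + 1 + n)) * (Nat.factorial (p' + 1 + n) : ℝ) ^ 2 *
            (2 * ((p' + 1 + n : ℕ) : ℝ) + 1))) ≤
      (Real.exp 1 / (Real.sqrt 2 * Real.pi ^ 2)) * (1 / Real.sqrt p') := by
  have htail := tail_sum_bound p' hp'
  have hsum_eq : ∑' n : ℕ,
        ((Nat.factorial (2 * (p' + 1 + n)) : ℝ) /
          (2 ^ (2 * (p' + 1 + n)) * (Nat.factorial (p' + 1 + n) : ℝ) ^ 2 *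
            (2 * ((p' + 1 + n : ℕ) : ℝ) + 1)))
      = ∑' n : ℕ, kterm (p' + 1 + n) := by
    apply tsum_congr
    intro n
    rfl
  rw [hsum_eq]
  have hp'1 : (1:ℝ) ≤ (p':ℝ) := by exact_mod_cast hp'
  have hpi : 0 < Real.pi := Real.pi_pos
  have hsp : 0 < Real.sqrt p' := Real.sqrt_pos.mpr (by linarith)
  have hs31 : 0 < Real.sqrt (3 * (p':ℝ) + 1) := Real.sqrt_pos.mpr (by linarith)
  -- key constant inequality: sqrt 2 * pi ≤ sqrt 3 * exp 1
  have hconst : Real.sqrt 2 * Real.pi ≤ Real.sqrt 3 * Real.exp 1 := by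
    have h2 : Real.sqrt 2 ≤ 1.41422 := by
      rw [show (1.41422:ℝ) = Real.sqrt (1.41422^2) by
        rw [Real.sqrt_sq]; norm_num]
      apply Real.sqrt_le_sqrt; norm_num
    have h3 : (1.73205:ℝ) ≤ Real.sqrt 3 := by
      rw [show (1.73205:ℝ) = Real.sqrt (1.73205^2) by
        rw [Real.sqrt_sq]; norm_num]
      apply Real.sqrt_le_sqrt; norm_num
    have hpi' : Real.pi ≤ 3.15 := by linarith [Real.pi_lt_d2]
    have he : (2.7182818283:ℝ) ≤ Real.exp 1 := le_of_lt Real.exp_one_gt_d9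
    have hexp_pos : (0:ℝ) < Real.exp 1 := Real.exp_pos 1
    nlinarith [Real.sqrt_nonneg 2, Real.sqrt_nonneg 3]
  -- sqrt 3 * sqrt p' ≤ sqrt (3p'+1)
  have hsqrt3p : Real.sqrt 3 * Real.sqrt p' ≤ Real.sqrt (3 * (p':ℝ) + 1) := by
    rw [← Real.sqrt_mul (by norm_num)]
    apply Real.sqrt_le_sqrt; linarith
  have hs2 : 0 < Real.sqrt 2 := by positivity
  have hs3 : 0 < Real.sqrt 3 := by positivity
  have hexp : 0 < Real.exp 1 := Real.exp_pos 1
  have hT : 0 ≤ ∑' n : ℕ, kterm (p' + 1 + n) :=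
    tsum_nonneg (fun n => kterm_nonneg _)
  -- chain: (1/π) * T ≤ (1/π) * (1/sqrt(3p'+1)) ≤ e/(√2 π²) * (1/√p')
  have h1 : (1 / Real.pi) * ∑' n : ℕ, kterm (p' + 1 + n)
      ≤ (1 / Real.pi) * (1 / Real.sqrt (3 * (p':ℝ) + 1)) := by
    exact mul_le_mul_of_nonneg_left htail (by positivity)
  refine le_trans h1 ?_
  rw [div_mul_div_comm, div_mul_div_comm,
    div_le_div_iff₀ (by positivity) (by positivity)]
  calc 1 * 1 * (Real.sqrt 2 * Real.pi ^ 2 * Real.sqrt p')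
      = (Real.sqrt 2 * Real.pi) * (Real.sqrt p') * Real.pi := by ring
    _ ≤ (Real.sqrt 3 * Real.exp 1) * (Real.sqrt p') * Real.pi := by
        apply mul_le_mul_of_nonneg_right _ (le_of_lt hpi)
        exact mul_le_mul_of_nonneg_right hconst (le_of_lt hsp)
    _ = Real.exp 1 * (Real.sqrt 3 * Real.sqrt p') * Real.pi := by ring
    _ ≤ Real.exp 1 * Real.sqrt (3 * (p':ℝ) + 1) * Real.pi := by
        apply mul_le_mul_of_nonneg_right _ (le_of_lt hpi)
        exact mul_le_mul_of_nonneg_left hsqrt3p (le_of_lt hexp)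
    _ = Real.exp 1 * 1 * (Real.pi * Real.sqrt (3 * (p':ℝ) + 1)) := by ring
end

section
/- For every integer p ≥ 3, the derivative of the truncated polynomial of κ₀ is bounded: max over α ∈ [-1 - 1/(6p), 1 + 1/(6p)] of (1/π)·Σ_{n=0}^{p} ((2n)!/(2^{2n}(n!)²))·(1 + 1/(6p))^{2n} ≤ 1/π + (e^{4/3}/(√2·π²))·Σ_{n=1}^p (1/√n) ≤ √p. -/
open Real

lemma cb_cast (n : ℕ) : ((Nat.factorial (2*n) : ℝ)) = (Nat.centralBinom n : ℝ) * (Nat.factorial n : ℝ)^2 := by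
  have h : n ≤ 2*n := by omega
  have := Nat.choose_mul_factorial_mul_factorial h
  have h2 : 2*n - n = n := by omega
  rw [h2] at this
  rw [Nat.centralBinom]
  rw_mod_cast [← this]
  push_cast
  ring

lemma csq (n : ℕ) : (Nat.centralBinom n : ℝ)^2 * (3*n+1) ≤ 16^n := by
  induction n with
  | zero => simp [Nat.centralBinom]
  | succ n ih =>
    have key := Nat.succ_mul_centralBinom_succ n
    have keyR : ((n:ℝ)+1) * (Nat.centralBinom (n+1) : ℝ) = 2*(2*n+1) * (Nat.centralBinom n : ℝ) := by
      exact_mod_cast key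
    set x : ℝ := (Nat.centralBinom n : ℝ) with hx
    set y : ℝ := (Nat.centralBinom (n+1) : ℝ) with hy
    have hxpos : (0:ℝ) ≤ x := by positivity
    have hypos : (0:ℝ) ≤ y := by positivity
    have hpow : (0:ℝ) < 16^n := by positivity
    have hn1 : (0:ℝ) < ((n:ℝ)+1)^2 := by positivity
    have poly : (2*(2*(n:ℝ)+1))^2 * (3*(n+1)+1) ≤ 16*((n:ℝ)+1)^2*(3*n+1) := by nlinarith [sq_nonneg ((n:ℝ))]
    have hsq : ((n:ℝ)+1)^2 * y^2 = (2*(2*(n:ℝ)+1))^2 * x^2 := by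
      calc ((n:ℝ)+1)^2 * y^2 = (((n:ℝ)+1)*y)^2 := by ring
        _ = (2*(2*(n:ℝ)+1) * x)^2 := by rw [keyR]
        _ = (2*(2*(n:ℝ)+1))^2 * x^2 := by ring
    have goal2 : ((n:ℝ)+1)^2 * (y^2 * (3*(n+1)+1)) ≤ ((n:ℝ)+1)^2 * 16^(n+1) := by
      have h1 : ((n:ℝ)+1)^2 * (y^2 * (3*(n+1)+1)) = (2*(2*(n:ℝ)+1))^2 * x^2 * (3*(n+1)+1) := by
        rw [← hsq]; ring
      rw [h1]
      calc (2*(2*(n:ℝ)+1))^2 * x^2 * (3*(n+1)+1)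
          ≤ 16*((n:ℝ)+1)^2*(3*n+1) * x^2 := by nlinarith [sq_nonneg x, poly]
        _ ≤ 16*((n:ℝ)+1)^2 * 16^n := by nlinarith [ih, hn1]
        _ = ((n:ℝ)+1)^2 * 16^(n+1) := by ring
    have := (mul_le_mul_iff_right₀ hn1).mp goal2
    push_cast
    push_cast at this
    linarith

lemma num1 : Real.sqrt 2 * Real.pi ≤ Real.sqrt 3 * Real.exp 1 := by
  have h2 : Real.sqrt 2 ≤ 1.4143 := by
    nlinarith [Real.sq_sqrt (show (0:ℝ) ≤ 2 by norm_num), Real.sqrt_nonneg 2]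
  have h3 : (1.732:ℝ) ≤ Real.sqrt 3 := by
    nlinarith [Real.sq_sqrt (show (0:ℝ) ≤ 3 by norm_num), Real.sqrt_nonneg 3]
  have hpi : Real.pi < 3.15 := Real.pi_lt_d2
  have he : (2.7182818283:ℝ) < Real.exp 1 := Real.exp_one_gt_d9
  nlinarith [Real.pi_pos, Real.sqrt_nonneg 2, Real.sqrt_nonneg 3]

lemma num2 : Real.exp (4/3) ≤ 3.8 := by
  have h4 : Real.exp (4/3) ^ 3 = Real.exp 4 := by
    rw [← Real.exp_nat_mul]; norm_num
  have he : Real.exp 1 < 2.7182818286 := Real.exp_one_lt_d9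
  have h4' : Real.exp 4 = Real.exp 1 ^ 4 := by
    rw [← Real.exp_nat_mul]; norm_num
  have hb : Real.exp 4 < 54.872 := by
    rw [h4']
    nlinarith [Real.exp_pos 1, (Real.exp_pos 1).le, sq_nonneg (Real.exp 1), pow_lt_pow_left₀ he (Real.exp_pos 1).le (by norm_num : (4:ℕ) ≠ 0)]
  have : Real.exp (4/3)^3 < 3.8^3 := by rw [h4]; norm_num; linarith
  exact le_of_lt (lt_of_pow_lt_pow_left₀ 3 (by norm_num) this)


-- c n ≤ 1/(√3 √n) for n ≥ 1
lemma c_le (n : ℕ) (hn : 1 ≤ n) :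
    (Nat.centralBinom n : ℝ) / 4^n ≤ 1 / (Real.sqrt 3 * Real.sqrt n) := by
  have hn' : (1:ℝ) ≤ n := by exact_mod_cast hn
  set c : ℝ := (Nat.centralBinom n : ℝ) / 4^n with hc
  have hc0 : 0 ≤ c := by positivity
  have h16 : (16:ℝ)^n = (4^n)^2 := by rw [← pow_mul, mul_comm, pow_mul]; norm_num
  have hcsq : c^2 * (3*n+1) ≤ 1 := by
    have := csq n
    rw [h16] at this
    have h4 : (0:ℝ) < (4:ℝ)^n := by positivity
    rw [hc, div_pow]
    rw [div_mul_eq_mul_div, div_le_one (by positivity)]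
    linarith
  set s : ℝ := Real.sqrt 3 * Real.sqrt n with hs
  have hs0 : 0 < s := by
    apply mul_pos (Real.sqrt_pos.mpr (by norm_num)) (Real.sqrt_pos.mpr (by linarith))
  have hssq : s^2 = 3*n := by
    rw [hs, mul_pow, Real.sq_sqrt (by norm_num : (0:ℝ) ≤ 3), Real.sq_sqrt (by linarith)]
  rw [le_div_iff₀ hs0]
  nlinarith [hcsq, hssq, hc0, hs0.le, sq_nonneg (c*s - 1), sq_nonneg (c*s)]

lemma sum_sqrt_le (p : ℕ) : ∑ n ∈ Finset.Icc 1 p, (1 / Real.sqrt n) ≤ 2 * Real.sqrt p := by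
  induction p with
  | zero => simp
  | succ p ih =>
    rw [Finset.sum_Icc_succ_top (by omega)]
    have ha : Real.sqrt p ^ 2 = p := Real.sq_sqrt (by positivity)
    have hb : Real.sqrt (p+1) ^ 2 = (p:ℝ)+1 := by
      rw [Real.sq_sqrt (by positivity)]
    have hbpos : 0 < Real.sqrt ((p:ℕ)+1 : ℕ) := Real.sqrt_pos.mpr (by positivity)
    have hbpos' : 0 < Real.sqrt ((p:ℝ)+1) := Real.sqrt_pos.mpr (by positivity)
    have key : 1 / Real.sqrt ((p:ℝ)+1) ≤ 2 * Real.sqrt ((p:ℝ)+1) - 2 * Real.sqrt p := by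
      rw [div_le_iff₀ hbpos']
      nlinarith [sq_nonneg (Real.sqrt p - Real.sqrt ((p:ℝ)+1)), Real.sqrt_nonneg (p:ℝ),
        hb, ha]
    push_cast
    push_cast at ih
    linarith

lemma part2 (p : ℕ) (hp : 3 ≤ p) :
    1 / Real.pi + (Real.exp (4 / 3) / (Real.sqrt 2 * Real.pi ^ 2)) *
        ∑ n ∈ Finset.Icc 1 p, (1 / Real.sqrt n) ≤ Real.sqrt p := by
  have hK : Real.exp (4/3) / (Real.sqrt 2 * Real.pi ^ 2) ≤ 0.3 := by
    have num2 : Real.exp (4/3) ≤ 3.8 := num2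
    have h2 : (1.414:ℝ) ≤ Real.sqrt 2 := by
      nlinarith [Real.sq_sqrt (show (0:ℝ) ≤ 2 by norm_num), Real.sqrt_nonneg 2]
    have hpi : (3.14:ℝ) < Real.pi := by linarith [Real.pi_gt_d2]
    rw [div_le_iff₀ (by positivity)]
    nlinarith [Real.pi_pos]
  have hsum0 : 0 ≤ ∑ n ∈ Finset.Icc 1 p, (1 / Real.sqrt n) := by
    apply Finset.sum_nonneg; intro i _; positivity
  have hsum := sum_sqrt_le p
  have hsp : (1.7:ℝ) ≤ Real.sqrt p := by
    have : (1.7:ℝ) ≤ Real.sqrt 3 := by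
      nlinarith [Real.sq_sqrt (show (0:ℝ) ≤ 3 by norm_num), Real.sqrt_nonneg 3]
    calc (1.7:ℝ) ≤ Real.sqrt 3 := this
      _ ≤ Real.sqrt p := Real.sqrt_le_sqrt (by exact_mod_cast hp)
  have hpi' : 1 / Real.pi ≤ 0.32 := by
    rw [div_le_iff₀ Real.pi_pos]
    nlinarith [Real.pi_gt_d2]
  have hKpos : 0 ≤ Real.exp (4/3) / (Real.sqrt 2 * Real.pi ^ 2) := by positivity
  calc 1 / Real.pi + (Real.exp (4 / 3) / (Real.sqrt 2 * Real.pi ^ 2)) * ∑ n ∈ Finset.Icc 1 p, (1 / Real.sqrt n)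
      ≤ 0.32 + 0.3 * (2 * Real.sqrt p) := by
        have := mul_le_mul hK hsum hsum0 (by norm_num)
        linarith
    _ ≤ Real.sqrt p := by linarith


lemma part1 (p : ℕ) (hp : 3 ≤ p) :
    (1 / Real.pi) * ∑ n ∈ Finset.range (p + 1),
        ((Nat.factorial (2 * n) : ℝ) / (2 ^ (2 * n) * (Nat.factorial n : ℝ) ^ 2)) *
          (1 + 1 / (6 * (p : ℝ))) ^ (2 * n) ≤
      1 / Real.pi + (Real.exp (4 / 3) / (Real.sqrt 2 * Real.pi ^ 2)) *
        ∑ n ∈ Finset.Icc 1 p, (1 / Real.sqrt n) := by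
  have hppos : (0:ℝ) < p := by exact_mod_cast (by omega : 0 < p)
  set B : ℝ := 1 + 1 / (6 * (p:ℝ)) with hB
  set K : ℝ := Real.exp (4 / 3) / (Real.sqrt 2 * Real.pi ^ 2) with hK
  have hBpos : 0 < B := by rw [hB]; positivity
  -- rewrite each summand
  have hsummand : ∀ n : ℕ,
      ((Nat.factorial (2 * n) : ℝ) / (2 ^ (2 * n) * (Nat.factorial n : ℝ) ^ 2)) * B ^ (2 * n)
        = ((Nat.centralBinom n : ℝ) / 4 ^ n) * B ^ (2 * n) := by
    intro n
    rw [cb_cast n]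
    have h4 : (2:ℝ) ^ (2*n) = 4 ^ n := by rw [pow_mul]; norm_num
    rw [h4]
    have hf : (0:ℝ) < (Nat.factorial n : ℝ) := by exact_mod_cast Nat.factorial_pos n
    field_simp
  -- termwise bound for n ≥ 1
  have hterm : ∀ n : ℕ, 1 ≤ n → n ≤ p →
      (1 / Real.pi) * (((Nat.centralBinom n : ℝ) / 4 ^ n) * B ^ (2 * n)) ≤ K * (1 / Real.sqrt n) := by
    intro n h1 h2
    have hn' : (1:ℝ) ≤ (n:ℝ) := by exact_mod_cast h1
    have hBexp : B ^ (2*n) ≤ Real.exp (1/3) := by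
      have h1' : B ≤ Real.exp (1/(6*(p:ℝ))) := by
        rw [hB, add_comm]
        exact Real.add_one_le_exp _
      calc B ^ (2*n) ≤ Real.exp (1/(6*(p:ℝ))) ^ (2*n) :=
            pow_le_pow_left₀ hBpos.le h1' _
        _ = Real.exp ((2*(n:ℝ)) * (1/(6*(p:ℝ)))) := by
            rw [← Real.exp_nat_mul]; congr 1; push_cast; ring
        _ ≤ Real.exp (1/3) := by
            apply Real.exp_le_exp.mpr
            have hnp : (n:ℝ) ≤ (p:ℝ) := by exact_mod_cast h2
            rw [mul_one_div, div_le_div_iff₀ (by positivity) (by norm_num)]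
            nlinarith
    -- combine
    have hc := c_le n h1
    have hcnn : (0:ℝ) ≤ (Nat.centralBinom n : ℝ) / 4 ^ n := by positivity
    have hBnn : (0:ℝ) ≤ B ^ (2*n) := by positivity
    have hsn : (0:ℝ) < Real.sqrt n := Real.sqrt_pos.mpr (by linarith)
    have hs3 : (0:ℝ) < Real.sqrt 3 := Real.sqrt_pos.mpr (by norm_num)
    have hs2 : (0:ℝ) < Real.sqrt 2 := Real.sqrt_pos.mpr (by norm_num)
    have step : ((Nat.centralBinom n : ℝ) / 4 ^ n) * B ^ (2 * n)
        ≤ (1 / (Real.sqrt 3 * Real.sqrt n)) * Real.exp (1/3) := by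
      apply mul_le_mul hc hBexp hBnn (by positivity)
    have hpi : (0:ℝ) < Real.pi := Real.pi_pos
    calc (1 / Real.pi) * (((Nat.centralBinom n : ℝ) / 4 ^ n) * B ^ (2 * n))
        ≤ (1 / Real.pi) * ((1 / (Real.sqrt 3 * Real.sqrt n)) * Real.exp (1/3)) := by
          apply mul_le_mul_of_nonneg_left step (by positivity)
      _ ≤ K * (1 / Real.sqrt n) := by
          rw [hK]
          have e1 : 1/Real.pi * (1/(Real.sqrt 3 * Real.sqrt n) * Real.exp (1/3)) = Real.exp (1/3) / (Real.pi * (Real.sqrt 3 * Real.sqrt n)) := by ring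
          have e2 : Real.exp (4/3) / (Real.sqrt 2 * Real.pi^2) * (1/Real.sqrt n) = Real.exp (4/3) / (Real.sqrt 2 * Real.pi^2 * Real.sqrt n) := by ring
          rw [e1, e2, div_le_div_iff₀ (by positivity) (by positivity)]
          have hexp : Real.exp (4/3) = Real.exp 1 * Real.exp (1/3) := by
            rw [← Real.exp_add]; norm_num
          rw [hexp]
          nlinarith [mul_le_mul_of_nonneg_left num1 (le_of_lt (show (0:ℝ) < Real.exp (1/3) * Real.pi * Real.sqrt n by positivity)), Real.exp_pos (1/3), Real.pi_pos]
  -- assemble the sum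
  rw [Finset.mul_sum]
  have hrw : ∀ n ∈ Finset.range (p+1),
      (1 / Real.pi) * (((Nat.factorial (2 * n) : ℝ) / (2 ^ (2 * n) * (Nat.factorial n : ℝ) ^ 2)) * B ^ (2 * n))
        = (1 / Real.pi) * (((Nat.centralBinom n : ℝ) / 4 ^ n) * B ^ (2 * n)) := by
    intro n _; rw [hsummand n]
  rw [Finset.sum_congr rfl hrw, Finset.sum_range_succ']
  have h0 : (1 / Real.pi) * (((Nat.centralBinom 0 : ℝ) / 4 ^ 0) * B ^ (2 * 0)) = 1 / Real.pi := by
    simp [Nat.centralBinom]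
  rw [h0, Finset.mul_sum, show Finset.Icc 1 p = Finset.Ico 1 (p+1) by rw [Finset.Ico_add_one_right_eq_Icc],
    Finset.sum_Ico_eq_sum_range]
  simp only [Nat.add_sub_cancel]
  rw [add_comm (∑ i ∈ Finset.range p, (1 / Real.pi) * (((Nat.centralBinom (i+1) : ℝ) / 4 ^ (i+1)) * B ^ (2 * (i+1)))) (1 / Real.pi)]
  apply add_le_add le_rfl
  apply Finset.sum_le_sum
  intro i hi
  have hi' : i + 1 ≤ p := Finset.mem_range.mp hi
  have := hterm (i+1) (by omega) hi'
  have hcast : ((1:ℕ) + i : ℕ) = (i + 1 : ℕ) := by omega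
  rw [hcast]
  exact this

/-- bound on the derivative of the truncated Taylor polynomial of κ₀ on the
interval [-1 - 1/(6p), 1 + 1/(6p)]. -/
theorem PdotTrunc_deriv_bound (p : ℕ) (hp : 3 ≤ p) :
    (1 / Real.pi) * ∑ n ∈ Finset.range (p + 1),
        ((Nat.factorial (2 * n) : ℝ) / (2 ^ (2 * n) * (Nat.factorial n : ℝ) ^ 2)) *
          (1 + 1 / (6 * (p : ℝ))) ^ (2 * n) ≤
      1 / Real.pi + (Real.exp (4 / 3) / (Real.sqrt 2 * Real.pi ^ 2)) *
        ∑ n ∈ Finset.Icc 1 p, (1 / Real.sqrt n) ∧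
    1 / Real.pi + (Real.exp (4 / 3) / (Real.sqrt 2 * Real.pi ^ 2)) *
        ∑ n ∈ Finset.Icc 1 p, (1 / Real.sqrt n) ≤ Real.sqrt p :=
  ⟨part1 p hp, part2 p hp⟩
end
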